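/- arXiv:2311.09557 — 6 statements merged into one kernel-verified Lean document; each statement's English description precedes it below -/
import Mathlib

section
/- Let T be a finite tree (a finite connected acyclic simple graph) with vertex weights n : V(T) → ℕ and edge weights k : E(T) → ℕ satisfying ∑_{e ∈ E(T)} k(e) = ∑_{v ∈ V(T)} n(v). Then there is at most one balanced weighting for (T, n, k); that is, any two functions κ, κ' on the flags of T satisfying the balanced-weighting conditions are equal. -/
open scoped Classical

/-- Given a graph `G` with vertex weights `n` and edge weights `k`, a *balanced weighting*
is an assignment `κ` of a natural number to each flag (dart) of `G` such that the two flag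
weights of each edge sum to the edge weight, and the flag weights around each vertex sum
to the vertex weight. -/
def IsBalancedWeighting {V : Type*} [Fintype V] (G : SimpleGraph V)
    (n : V → ℕ) (k : Sym2 V → ℕ) (κ : G.Dart → ℕ) : Prop :=
  (∀ d : G.Dart, κ d + κ d.symm = k d.edge) ∧
  (∀ v : V, ∑ d ∈ Finset.univ.filter (fun d : G.Dart => d.fst = v), κ d = n v)

open Finset in
lemma balanced_aux {V : Type*} [Fintype V]
    (G : SimpleGraph V) (hT : G.IsTree)
    (n : V → ℕ) (k : Sym2 V → ℕ)
    (κ : G.Dart → ℕ) (hκ : IsBalancedWeighting G n k κ) (d : G.Dart)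
    (A : Finset V)
    (hA : A = univ.filter (fun v => (G \ SimpleGraph.fromEdgeSet {d.edge}).Reachable d.snd v)) :
    ∑ v ∈ A, n v = κ d.symm +
      ∑ d1 ∈ univ.filter (fun d1 : G.Dart => d1.fst ∈ A ∧ d1.snd ∈ A), κ d1 := by
  have hedge : d.edge = s(d.fst, d.snd) := rfl
  have hAmem : ∀ v, v ∈ A ↔ (G \ SimpleGraph.fromEdgeSet {d.edge}).Reachable d.snd v := by
    intro v; simp [hA]
  -- d.snd ∈ A
  have hsnd : d.snd ∈ A := (hAmem _).2 (SimpleGraph.Reachable.refl _)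
  -- d.fst ∉ A, by acyclicity (the edge is a bridge)
  have hfst : d.fst ∉ A := by
    have hbr := (SimpleGraph.isAcyclic_iff_forall_adj_isBridge.mp hT.IsAcyclic) d.adj
    rw [SimpleGraph.isBridge_iff] at hbr
    intro h
    exact hbr ((hAmem _).1 h).symm
  -- darts with fst ∈ A are d.symm plus the darts inside A
  set D : Finset G.Dart := univ.filter (fun d1 : G.Dart => d1.fst ∈ A ∧ d1.snd ∈ A) with hD
  have hsplit : univ.filter (fun d1 : G.Dart => d1.fst ∈ A) = insert d.symm D := by
    ext d1
    simp only [mem_filter, mem_univ, true_and, mem_insert, hD]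
    constructor
    · intro h1
      by_cases h2 : d1.snd ∈ A
      · exact Or.inr ⟨h1, h2⟩
      · left
        by_cases he : d1.edge = d.edge
        · rcases (G.dart_edge_eq_iff d1 d).1 he with rfl | rfl
          · exact absurd h1 hfst
          · rfl
        · exfalso
          apply h2
          rw [hAmem] at h1 ⊢
          refine h1.trans (SimpleGraph.Adj.reachable ?_)
          simp only [SimpleGraph.sdiff_adj, SimpleGraph.fromEdgeSet_adj]
          refine ⟨d1.adj, ?_⟩
          rintro ⟨h3, -⟩
          exact he h3
    · rintro (rfl | ⟨h1, -⟩)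
      · exact hsnd
      · exact h1
  have hsymm_not : d.symm ∉ D := by
    simp only [hD, mem_filter, mem_univ, true_and, not_and]
    intro _
    simpa using hfst
  -- sum of n over A equals sum of κ over darts with fst ∈ A
  calc ∑ v ∈ A, n v = ∑ v ∈ A, ∑ d1 ∈ univ.filter (fun d1 : G.Dart => d1.fst = v), κ d1 := by
        refine Finset.sum_congr rfl fun v _ => (hκ.2 v).symm
    _ = ∑ d1 ∈ univ.filter (fun d1 : G.Dart => d1.fst ∈ A), κ d1 :=
        Finset.sum_fiberwise_eq_sum_filter _ _ _ _
    _ = κ d.symm + ∑ d1 ∈ D, κ d1 := by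
        rw [hsplit, Finset.sum_insert hsymm_not]

/-- If `T` is a finite tree with vertex weights `n` and edge weights `k` such that
`∑ₑ k(e) = ∑ᵥ n(v)`, then there is at most one balanced weighting for `(T, n, k)`. -/
theorem balancedWeighting_unique {V : Type*} [Fintype V]
    (G : SimpleGraph V) (hT : G.IsTree)
    (n : V → ℕ) (k : Sym2 V → ℕ)
    (hsum : ∑ e ∈ G.edgeFinset, k e = ∑ v : V, n v)
    (κ κ' : G.Dart → ℕ)
    (hκ : IsBalancedWeighting G n k κ) (hκ' : IsBalancedWeighting G n k κ') :
    κ = κ' := by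
  classical
  have key : ∀ d : G.Dart, κ d.symm = κ' d.symm := by
    intro d
    set A : Finset V :=
      Finset.univ.filter (fun v => (G \ SimpleGraph.fromEdgeSet {d.edge}).Reachable d.snd v)
      with hA
    set D : Finset G.Dart :=
      Finset.univ.filter (fun d1 : G.Dart => d1.fst ∈ A ∧ d1.snd ∈ A) with hD
    have h1 := balanced_aux G hT n k κ hκ d A hA
    have h2 := balanced_aux G hT n k κ' hκ' d A hA
    -- D is closed under symm, so 2 * ∑_D κ = ∑_D k(edge), determined
    have hDsum : ∀ (μ : G.Dart → ℕ), (∀ e : G.Dart, μ e + μ e.symm = k e.edge) →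
        2 * ∑ d1 ∈ D, μ d1 = ∑ d1 ∈ D, k d1.edge := by
      intro μ hμ
      have hrev : ∑ d1 ∈ D, μ d1 = ∑ d1 ∈ D, μ d1.symm := by
        apply Finset.sum_nbij' (fun d1 => d1.symm) (fun d1 => d1.symm)
        · intro a ha
          simp only [hD, Finset.mem_filter, Finset.mem_univ, true_and] at ha ⊢
          exact ⟨ha.2, ha.1⟩
        · intro a ha
          simp only [hD, Finset.mem_filter, Finset.mem_univ, true_and] at ha ⊢
          exact ⟨ha.2, ha.1⟩
        · intro a _; exact SimpleGraph.Dart.symm_symm a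
        · intro a _; exact SimpleGraph.Dart.symm_symm a
        · intro a _; rw [SimpleGraph.Dart.symm_symm]
      calc 2 * ∑ d1 ∈ D, μ d1 = ∑ d1 ∈ D, μ d1 + ∑ d1 ∈ D, μ d1.symm := by
            rw [← hrev]; ring
        _ = ∑ d1 ∈ D, (μ d1 + μ d1.symm) := (Finset.sum_add_distrib).symm
        _ = ∑ d1 ∈ D, k d1.edge := Finset.sum_congr rfl fun d1 _ => hμ d1
    have e1 := hDsum κ hκ.1
    have e2 := hDsum κ' hκ'.1
    rw [← hD] at h1 h2
    omega
  funext d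
  have := key d.symm
  rwa [SimpleGraph.Dart.symm_symm] at this
end

section
/- Let T be a finite tree with at least two vertices, with vertex weights n : V(T) → ℕ and edge weights k : E(T) → ℕ. Let v be a leaf of T with unique incident edge e = {v, v'}, and suppose n(v) ≤ k(e) ≤ n(v) + n(v'). Let T' be the tree obtained from T by deleting v and e, let k' be the restriction of k to E(T'), and define n' : V(T') → ℕ by n'(v') = n(v') − (k(e) − n(v)) and n'(u) = n(u) for u ≠ v'. Then (T, n, k) admits a balanced weighting if and only if (T', n', k') admits one; moreover restriction of flags gives a bijection between balanced weightings of (T, n, k) and balanced weightings of (T', n', k'). -/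
open scoped Classical

/-- A flag (dart) of the induced subgraph on `{u | u ≠ v}` is in particular a flag of `G`. -/
def liftDart {V : Type*} (G : SimpleGraph V) (v : V)
    (d : (G.induce {u | u ≠ v}).Dart) : G.Dart :=
  ⟨((d.fst : V), (d.snd : V)), by exact d.adj⟩

section Aux

variable {V : Type*} [Fintype V] (G : SimpleGraph V) (v : V)

/-- A dart of `G` avoiding `v` gives a dart of the induced subgraph. -/
def restrictDart (d : G.Dart) (h1 : d.fst ≠ v) (h2 : d.snd ≠ v) :
    (G.induce {u | u ≠ v}).Dart :=
  ⟨(⟨d.fst, h1⟩, ⟨d.snd, h2⟩), d.adj⟩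

lemma lift_restrict (d : G.Dart) (h1 : d.fst ≠ v) (h2 : d.snd ≠ v) :
    liftDart G v (restrictDart G v d h1 h2) = d := rfl

lemma lift_fst_ne (d : (G.induce {u | u ≠ v}).Dart) : (liftDart G v d).fst ≠ v := d.fst.2

lemma lift_snd_ne (d : (G.induce {u | u ≠ v}).Dart) : (liftDart G v d).snd ≠ v := d.snd.2

lemma restrict_lift (d : (G.induce {u | u ≠ v}).Dart) :
    restrictDart G v (liftDart G v d) (lift_fst_ne G v d) (lift_snd_ne G v d) = d := rfl

lemma lift_symm (d : (G.induce {u | u ≠ v}).Dart) :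
    liftDart G v d.symm = (liftDart G v d).symm := rfl

lemma lift_edge (d : (G.induce {u | u ≠ v}).Dart) :
    (liftDart G v d).edge = d.edge.map Subtype.val := rfl

/-- Key sum comparison: for `u ≠ v`, summing a function over lifted darts at `u`
equals summing over darts of `G` at `u` avoiding `v`. -/
lemma sum_lift (κ : G.Dart → ℕ) (u : V) (hu : u ≠ v) :
    ∑ d ∈ @Finset.filter _
        (fun d : (G.induce {u | u ≠ v}).Dart => d.fst = (⟨u, hu⟩ : {u | u ≠ v}))
        (fun _ => Classical.propDecidable _) Finset.univ,
      κ (liftDart G v d)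
    = ∑ d ∈ Finset.univ.filter (fun d : G.Dart => d.fst = u ∧ d.snd ≠ v), κ d := by
  refine Finset.sum_bij' (fun d _ => liftDart G v d)
    (fun d hd => restrictDart G v d
      (by simp only [Finset.mem_filter] at hd; rw [hd.2.1]; exact hu)
      (by simp only [Finset.mem_filter] at hd; exact hd.2.2)) ?_ ?_ ?_ ?_ ?_
  · intro d hd
    simp only [Finset.mem_filter, Finset.mem_univ, true_and] at hd ⊢
    refine ⟨?_, lift_snd_ne G v d⟩
    show (d.fst : V) = u
    rw [hd]
  · intro d hd
    simp only [Finset.mem_filter, Finset.mem_univ, true_and] at hd ⊢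
    exact Subtype.ext hd.1
  · intro d _; rfl
  · intro d _; rfl
  · intro d _; rfl

end Aux

/-- Let `T` be a finite tree with at least two vertices, `v` a leaf with unique incident
edge `e = {v, v'}`, and suppose `n(v) ≤ k(e) ≤ n(v) + n(v')`.  Let `T'` be obtained from
`T` by deleting `v` and `e`, let `k'` restrict `k`, and let `n'` agree with `n` except
`n'(v') = n(v') - (k(e) - n(v))`.  Then `(T,n,k)` admits a balanced weighting iff
`(T',n',k')` does; moreover restriction of flags is a bijection between the balanced
weightings of `(T,n,k)` and those of `(T',n',k')`. -/
theorem balancedWeighting_deleteLeaf {V : Type*} [Fintype V]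
    (G : SimpleGraph V) (hT : G.IsTree) (hcard : 2 ≤ Fintype.card V)
    (n : V → ℕ) (k : Sym2 V → ℕ)
    (v v' : V) (hadj : G.Adj v v') (hdeg : G.degree v = 1)
    (hlow : n v ≤ k s(v, v')) (hhigh : k s(v, v') ≤ n v + n v')
    (n' : {u : V // u ≠ v} → ℕ)
    (hn' : ∀ u : {u : V // u ≠ v},
      n' u = if (u : V) = v' then n v' - (k s(v, v') - n v) else n (u : V))
    (k' : Sym2 {u : V // u ≠ v} → ℕ)
    (hk' : ∀ e : Sym2 {u : V // u ≠ v}, k' e = k (e.map Subtype.val)) :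
    ((∃ κ : G.Dart → ℕ, IsBalancedWeighting G n k κ) ↔
      (∃ κ' : (G.induce {u | u ≠ v}).Dart → ℕ,
        IsBalancedWeighting (G.induce {u | u ≠ v}) n' k' κ')) ∧
    Set.BijOn
      (fun (κ : G.Dart → ℕ) (d : (G.induce {u | u ≠ v}).Dart) => κ (liftDart G v d))
      {κ | IsBalancedWeighting G n k κ}
      {κ' | IsBalancedWeighting (G.induce {u | u ≠ v}) n' k' κ'} := by
  have hvv' : v ≠ v' := hadj.ne
  -- the unique neighbour of `v` is `v'`
  have hnb : ∀ u : V, G.Adj v u → u = v' := by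
    intro u hu
    rw [SimpleGraph.degree] at hdeg
    obtain ⟨w, hw⟩ := Finset.card_eq_one.mp hdeg
    have h1 : u ∈ G.neighborFinset v := by simpa using hu
    have h2 : v' ∈ G.neighborFinset v := by simpa using hadj
    rw [hw, Finset.mem_singleton] at h1 h2
    rw [h1, h2]
  set dv : G.Dart := ⟨(v, v'), hadj⟩ with hdv
  set dv' : G.Dart := ⟨(v', v), hadj.symm⟩ with hdv'
  have hdvsymm : dv.symm = dv' := rfl
  have hdvedge : dv.edge = s(v, v') := rfl
  -- uniqueness of darts out of `v`
  have huniq : ∀ d : G.Dart, d.fst = v → d = dv := by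
    intro d hd
    have h2 : d.snd = v' := hnb d.snd (hd ▸ d.adj)
    apply SimpleGraph.Dart.ext
    exact Prod.ext hd h2
  have huniq' : ∀ d : G.Dart, d.snd = v → d = dv' := by
    intro d hd
    have := huniq d.symm hd
    have : d = dv.symm := by rw [← this]; rfl
    rw [this, hdvsymm]
  -- the filter at `v` is `{dv}`
  have hfiltv : Finset.univ.filter (fun d : G.Dart => d.fst = v) = {dv} := by
    ext d
    simp only [Finset.mem_filter, Finset.mem_univ, true_and, Finset.mem_singleton]
    exact ⟨fun h => huniq d h, fun h => by rw [h]⟩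
  -- the filter at `v'` splits
  have hfiltv' : Finset.univ.filter (fun d : G.Dart => d.fst = v') =
      insert dv' (Finset.univ.filter (fun d : G.Dart => d.fst = v' ∧ d.snd ≠ v)) := by
    ext d
    simp only [Finset.mem_filter, Finset.mem_univ, true_and, Finset.mem_insert]
    constructor
    · intro h
      by_cases h2 : d.snd = v
      · exact Or.inl (huniq' d h2)
      · exact Or.inr ⟨h, h2⟩
    · rintro (h | h)
      · rw [h]
      · exact h.1
  have hnotmem : dv' ∉ Finset.univ.filter (fun d : G.Dart => d.fst = v' ∧ d.snd ≠ v) := by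
    simp [hdv']
  -- for u ≠ v, v', the darts at u avoid v automatically
  have hfiltu : ∀ u : V, u ≠ v → u ≠ v' →
      Finset.univ.filter (fun d : G.Dart => d.fst = u ∧ d.snd ≠ v) =
      Finset.univ.filter (fun d : G.Dart => d.fst = u) := by
    intro u hu hu' ; ext d
    simp only [Finset.mem_filter, Finset.mem_univ, true_and, and_iff_left_iff_imp]
    intro h1 h2
    exact hu' (by rw [← h1]; exact hnb d.fst ((h2 ▸ d.adj).symm))
  -- value of a balanced weighting on dv and dv'
  have hval : ∀ κ : G.Dart → ℕ, IsBalancedWeighting G n k κ →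
      κ dv = n v ∧ κ dv' = k s(v, v') - n v ∧ n v + κ dv' = k s(v, v') := by
    intro κ ⟨he, hv⟩
    have h1 : κ dv = n v := by
      have := hv v
      rw [hfiltv, Finset.sum_singleton] at this
      exact this
    have h2 := he dv
    rw [hdvsymm, hdvedge, h1] at h2
    exact ⟨h1, by omega, h2⟩
  -- Main: BijOn
  have hmaps : ∀ κ : G.Dart → ℕ, IsBalancedWeighting G n k κ →
      IsBalancedWeighting (G.induce {u | u ≠ v}) n' k'
        (fun d => κ (liftDart G v d)) := by
    intro κ hκ
    obtain ⟨h1, h2, h3⟩ := hval κ hκ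
    obtain ⟨he, hv⟩ := hκ
    constructor
    · intro d
      show κ (liftDart G v d) + κ (liftDart G v d.symm) = k' d.edge
      rw [lift_symm, hk', ← lift_edge]
      exact he (liftDart G v d)
    · intro u
      rcases u with ⟨u, hu⟩
      show ∑ d ∈ _, κ (liftDart G v d) = _
      refine Eq.trans (b := ∑ d ∈ Finset.univ.filter (fun d : G.Dart => d.fst = u ∧ d.snd ≠ v), κ d) (by convert sum_lift G v κ u hu) ?_
      by_cases huv' : u = v'
      · subst u
        have hs := hv v'
        rw [hfiltv', Finset.sum_insert hnotmem] at hs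
        rw [hn' ⟨v', hu⟩]
        rw [if_pos (show ((⟨v', hu⟩ : {u // u ≠ v}) : V) = v' from rfl)]
        omega
      · rw [hfiltu u hu huv', hv u, hn' ⟨u, hu⟩, if_neg huv']
  have hinj : Set.InjOn
      (fun (κ : G.Dart → ℕ) (d : (G.induce {u | u ≠ v}).Dart) => κ (liftDart G v d))
      {κ | IsBalancedWeighting G n k κ} := by
    intro κ₁ hκ₁ κ₂ hκ₂ heq
    obtain ⟨h11, h12, _⟩ := hval κ₁ hκ₁
    obtain ⟨h21, h22, _⟩ := hval κ₂ hκ₂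
    funext d
    by_cases hd1 : d.fst = v
    · rw [huniq d hd1, h11, h21]
    · by_cases hd2 : d.snd = v
      · rw [huniq' d hd2, h12, h22]
      · have : d = liftDart G v (restrictDart G v d hd1 hd2) := rfl
        rw [this]
        exact congrFun heq _
  have hsurj : Set.SurjOn
      (fun (κ : G.Dart → ℕ) (d : (G.induce {u | u ≠ v}).Dart) => κ (liftDart G v d))
      {κ | IsBalancedWeighting G n k κ}
      {κ' | IsBalancedWeighting (G.induce {u | u ≠ v}) n' k' κ'} := by
    intro κ' hκ'
    obtain ⟨he', hv'⟩ := hκ'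
    set κ : G.Dart → ℕ := fun d =>
      if h1 : d.fst = v then n v
      else if h2 : d.snd = v then k s(v, v') - n v
      else κ' (restrictDart G v d h1 h2) with hκdef
    have hκdv : κ dv = n v := by simp [hκdef, hdv]
    have hκdv' : κ dv' = k s(v, v') - n v := by
      simp [hκdef, hdv', hvv'.symm]
    have hκlift : ∀ d : (G.induce {u | u ≠ v}).Dart, κ (liftDart G v d) = κ' d := by
      intro d
      rw [hκdef]
      simp only
      rw [dif_neg (lift_fst_ne G v d), dif_neg (lift_snd_ne G v d)]
      rfl
    refine ⟨κ, ⟨?_, ?_⟩, funext hκlift⟩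
    · -- edge condition
      intro d
      by_cases h1 : d.fst = v
      · rw [huniq d h1, hdvsymm, hκdv, hκdv', hdvedge]
        omega
      · by_cases h2 : d.snd = v
        · rw [huniq' d h2]
          have : dv'.symm = dv := rfl
          rw [this, hκdv, hκdv']
          have : dv'.edge = s(v, v') := Sym2.eq_swap
          rw [this]
          omega
        · have hrs : κ d.symm = κ' (restrictDart G v d h1 h2).symm := by
            have : d.symm = liftDart G v (restrictDart G v d h1 h2).symm := rfl
            rw [this, hκlift]
          have hrd : κ d = κ' (restrictDart G v d h1 h2) := by
            have : d = liftDart G v (restrictDart G v d h1 h2) := rfl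
            conv_lhs => rw [this, hκlift]
          rw [hrd, hrs, he' (restrictDart G v d h1 h2), hk']
          congr 1
    · -- vertex condition
      intro u
      by_cases hu : u = v
      · subst hu
        rw [hfiltv, Finset.sum_singleton, hκdv]
      · have hsum : ∑ d ∈ Finset.univ.filter (fun d : G.Dart => d.fst = u ∧ d.snd ≠ v), κ d
            = n' ⟨u, hu⟩ := by
          rw [← sum_lift G v κ u hu]
          rw [← hv' ⟨u, hu⟩]
          exact Finset.sum_congr rfl (fun d _ => hκlift d)
        by_cases huv' : u = v'
        · subst u
          rw [hfiltv', Finset.sum_insert hnotmem, hsum, hκdv', hn' ⟨v', hu⟩]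
          rw [if_pos (show ((⟨v', hu⟩ : {u // u ≠ v}) : V) = v' from rfl)]
          omega
        · rw [← hfiltu u hu huv', hsum, hn' ⟨u, hu⟩, if_neg huv']
  have hbij : Set.BijOn
      (fun (κ : G.Dart → ℕ) (d : (G.induce {u | u ≠ v}).Dart) => κ (liftDart G v d))
      {κ | IsBalancedWeighting G n k κ}
      {κ' | IsBalancedWeighting (G.induce {u | u ≠ v}) n' k' κ'} :=
    ⟨fun κ hκ => hmaps κ hκ, hinj, hsurj⟩
  refine ⟨⟨?_, ?_⟩, hbij⟩
  · rintro ⟨κ, hκ⟩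
    exact ⟨_, hmaps κ hκ⟩
  · rintro ⟨κ', hκ'⟩
    obtain ⟨κ, hκ, -⟩ := hsurj hκ'
    exact ⟨κ, hκ⟩
end

section
/- Let T be a finite tree with vertex weights n : V(T) → ℕ and edge weights k : E(T) → ℕ satisfying ∑_{e ∈ E(T)} k(e) = ∑_{v ∈ V(T)} n(v). Let F denote the set of flags of T and let P = ∏_{e ∈ E(T)} (X_{(v_e, e)} + X_{(v'_e, e)})^{k(e)} in ℤ[X_f : f ∈ F]. If m : F → ℕ is an exponent function whose monomial ∏_f X_f^{m(f)} has nonzero coefficient in P and which satisfies ∑_{e incident to v} m(v, e) = n(v) for every vertex v, then m is a balanced weighting for (T, n, k) (hence is unique), and its coefficient in P equals ∏_{e ∈ E(T)} binom(k(e), m(v_e, e)). In particular, if no balanced weighting for (T, n, k) exists, then no monomial of P with nonzero coefficient satisfies ∑_{e incident to v} m(v, e) = n(v) for all v. -/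
open scoped Classical

lemma my_coeff_prod {σ R ι : Type*} [CommSemiring R] [DecidableEq σ] [DecidableEq ι]
    (f : ι → MvPolynomial σ R) (d : σ →₀ ℕ) (s : Finset ι) :
    MvPolynomial.coeff d (∏ j ∈ s, f j) =
      ∑ l ∈ Finset.finsuppAntidiag s d, ∏ i ∈ s, MvPolynomial.coeff (l i) (f i) := by
  simp_rw [← MvPolynomial.coeff_coe]
  rw [← MvPolynomial.coeToMvPowerSeries.ringHom_apply, map_prod, MvPowerSeries.coeff_prod]
  simp [MvPolynomial.coeToMvPowerSeries.ringHom_apply]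

lemma my_coeff_binom_pow {τ : Type*} {a b : τ} (hab : a ≠ b) (k : ℕ) (μ : τ →₀ ℕ) :
    MvPolynomial.coeff μ ((MvPolynomial.X a + MvPolynomial.X b : MvPolynomial τ ℤ) ^ k) =
    if μ = Finsupp.single a (μ a) + Finsupp.single b (μ b) ∧ μ a + μ b = k
    then ((k.choose (μ a)) : ℤ) else 0 := by
  classical
  rw [add_pow, MvPolynomial.coeff_sum]
  have hterm : ∀ i, MvPolynomial.coeff μ
      ((MvPolynomial.X a : MvPolynomial τ ℤ) ^ i * MvPolynomial.X b ^ (k - i) * (k.choose i : MvPolynomial τ ℤ)) =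
      if Finsupp.single a i + Finsupp.single b (k - i) = μ then ((k.choose i) : ℤ) else 0 := by
    intro i
    rw [← MvPolynomial.C_eq_coe_nat, mul_comm _ (MvPolynomial.C _), MvPolynomial.coeff_C_mul,
      MvPolynomial.X_pow_eq_monomial, MvPolynomial.X_pow_eq_monomial,
      MvPolynomial.monomial_mul, MvPolynomial.coeff_monomial, mul_one]
    split <;> simp
  simp_rw [hterm]
  by_cases h : μ = Finsupp.single a (μ a) + Finsupp.single b (μ b) ∧ μ a + μ b = k
  · rw [if_pos h]
    obtain ⟨hμ, hk⟩ := h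
    rw [Finset.sum_eq_single (μ a)]
    · rw [if_pos]
      have : k - μ a = μ b := by omega
      rw [this]; exact hμ.symm
    · intro i hi hne
      rw [if_neg]
      intro hcon
      apply hne
      have := congrArg (fun f => f a) hcon
      have h2 : μ a = i := by simpa [Finsupp.single_apply, hab, Ne.symm hab] using this.symm
      exact h2.symm
    · intro h
      exfalso
      exact h (Finset.mem_range.mpr (by omega))
  · rw [if_neg h]
    apply Finset.sum_eq_zero
    intro i hi
    rw [if_neg]
    intro hcon
    apply h
    have ha := congrArg (fun f => f a) hcon
    have hb := congrArg (fun f => f b) hcon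
    simp [Finsupp.single_apply, hab, Ne.symm hab] at ha hb
    have hik : i ≤ k := by simpa using Nat.lt_succ_iff.mp (Finset.mem_range.mp hi)
    constructor
    · rw [← hcon]
      simp [Finsupp.single_apply, hab, Ne.symm hab, ← ha, ← hb]
    · omega

set_option maxHeartbeats 1600000 in
/-- Let `T` be a finite tree with vertex weights `n` and edge weights `k` satisfying
`∑ₑ k(e) = ∑ᵥ n(v)`, and let `P = ∏_{e}(X_{(v_e,e)} + X_{(v'_e,e)})^{k(e)}` in the
polynomial ring over `ℤ` with one variable per flag (dart), the two flags of an edge `e`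
being encoded as `σ e` and `(σ e).symm` for an orientation `σ`.  If `m` is an exponent
function on flags whose monomial has nonzero coefficient in `P` and which satisfies
`∑_{e ∋ v} m(v,e) = n(v)` for every vertex `v`, then `m` is a balanced weighting for
`(T, n, k)`, and its coefficient in `P` equals `∏_e binom(k(e), m(v_e,e))`. -/
theorem coeff_nonzero_gives_balancedWeighting {V : Type*} [Fintype V]
    (G : SimpleGraph V) (hT : G.IsTree)
    (n : V → ℕ) (k : Sym2 V → ℕ)
    (hsum : ∑ e ∈ G.edgeFinset, k e = ∑ v : V, n v)
    (σ : (e : Sym2 V) → e ∈ G.edgeFinset → G.Dart)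
    (hσ : ∀ (e : Sym2 V) (he : e ∈ G.edgeFinset), (σ e he).edge = e)
    (P : MvPolynomial G.Dart ℤ)
    (hP : P = ∏ e ∈ G.edgeFinset.attach,
      (MvPolynomial.X (σ e.1 e.2) + MvPolynomial.X (σ e.1 e.2).symm) ^ k e.1)
    (m : G.Dart → ℕ)
    (hcoeff : MvPolynomial.coeff (Finsupp.equivFunOnFinite.symm m) P ≠ 0)
    (hvert : ∀ v : V, ∑ d ∈ Finset.univ.filter (fun d : G.Dart => d.fst = v), m d = n v) :
    IsBalancedWeighting G n k m ∧
    MvPolynomial.coeff (Finsupp.equivFunOnFinite.symm m) P =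
      ∏ e ∈ G.edgeFinset.attach, ((k e.1).choose (m (σ e.1 e.2)) : ℤ) := by
  classical
  set μ : G.Dart →₀ ℕ := Finsupp.equivFunOnFinite.symm m with hμdef
  have hμ : ∀ d, μ d = m d := fun d => rfl
  set a : {e // e ∈ G.edgeFinset} → G.Dart := fun e => σ e.1 e.2 with hadef
  have haedge : ∀ e, (a e).edge = e.1 := fun e => hσ e.1 e.2
  have hbedge : ∀ e, (a e).symm.edge = e.1 := fun e => by
    rw [SimpleGraph.Dart.edge_symm]; exact haedge e
  have hab : ∀ e, a e ≠ (a e).symm := fun e => (SimpleGraph.Dart.symm_ne _).symm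
  -- the canonical edge of a dart
  have hP' : P = ∏ e ∈ G.edgeFinset.attach,
      (MvPolynomial.X (a e) + MvPolynomial.X (a e).symm) ^ k e.1 := hP
  set ed : G.Dart → {e // e ∈ G.edgeFinset} :=
    fun d => ⟨d.edge, SimpleGraph.mem_edgeFinset.mpr d.edge_mem⟩ with heddef
  have hclass : ∀ d : G.Dart, d = a (ed d) ∨ d = (a (ed d)).symm := by
    intro d
    have h := (SimpleGraph.dart_edge_eq_iff (a (ed d)) d).mp (haedge (ed d))
    rcases h with h | h
    · exact Or.inl h.symm
    · right
      rw [h, SimpleGraph.Dart.symm_symm]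
  have hedeq : ∀ (e : {e // e ∈ G.edgeFinset}) (d : G.Dart),
      (d = a e ∨ d = (a e).symm) → ed d = e := by
    intro e d hd
    apply Subtype.ext
    rcases hd with rfl | rfl
    · exact haedge e
    · exact hbedge e
  -- value of the canonical local finsupp
  have hl0val : ∀ (e : {e // e ∈ G.edgeFinset}) (d : G.Dart),
      (Finsupp.single (a e) (m (a e)) + Finsupp.single (a e).symm (m (a e).symm)) d =
      if d = a e ∨ d = (a e).symm then m d else 0 := by
    intro e d
    rcases eq_or_ne d (a e) with rfl | h1
    · simp [Finsupp.single_apply, hab e, (hab e).symm]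
    · rcases eq_or_ne d (a e).symm with rfl | h2
      · simp [Finsupp.single_apply, hab e, (hab e).symm]
      · simp [Finsupp.single_apply, h1, h2, Ne.symm h1, Ne.symm h2]
  set l₀ : {e // e ∈ G.edgeFinset} →₀ (G.Dart →₀ ℕ) :=
    Finsupp.equivFunOnFinite.symm (fun e =>
      Finsupp.single (a e) (m (a e)) + Finsupp.single (a e).symm (m (a e).symm)) with hl₀def
  have hl₀ : ∀ e, l₀ e = Finsupp.single (a e) (m (a e)) +
      Finsupp.single (a e).symm (m (a e).symm) := fun e => rfl
  -- rewrite coefficient as a sum over the antidiagonal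
  have hPc : MvPolynomial.coeff μ P = ∑ l ∈ Finset.finsuppAntidiag G.edgeFinset.attach μ,
      ∏ e ∈ G.edgeFinset.attach, MvPolynomial.coeff (l e)
        ((MvPolynomial.X (a e) + MvPolynomial.X (a e).symm) ^ k e.1) := by
    rw [hP', my_coeff_prod]
  -- key: any nonvanishing term comes from l₀, and forces the balance condition
  have hkey : ∀ l ∈ Finset.finsuppAntidiag G.edgeFinset.attach μ,
      (∏ e ∈ G.edgeFinset.attach, MvPolynomial.coeff (l e)
        ((MvPolynomial.X (a e) + MvPolynomial.X (a e).symm : MvPolynomial G.Dart ℤ) ^ k e.1)) ≠ 0 →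
      (∀ e, l e = l₀ e ∧ m (a e) + m (a e).symm = k e.1) := by
    intro l hl hprod e
    rw [Finset.mem_finsuppAntidiag] at hl
    have hterm : ∀ e', l e' = Finsupp.single (a e') ((l e') (a e')) +
        Finsupp.single (a e').symm ((l e') ((a e').symm)) ∧
        (l e') (a e') + (l e') ((a e').symm) = k e'.1 := by
      intro e'
      have h := Finset.prod_ne_zero_iff.mp hprod e' (Finset.mem_attach _ _)
      rw [my_coeff_binom_pow (hab e') (k e'.1) (l e')] at h
      by_contra hcon
      rw [if_neg hcon] at h
      exact h rfl
    -- support of l e'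
    have hsupp : ∀ (e' : {e // e ∈ G.edgeFinset}) (d : G.Dart),
        ¬(d = a e' ∨ d = (a e').symm) → (l e') d = 0 := by
      intro e' d hd
      push_neg at hd
      rw [(hterm e').1]
      simp [Finsupp.single_apply, Ne.symm hd.1, Ne.symm hd.2]
    -- evaluate the sum at a dart
    have heval : ∀ d : G.Dart, (l (ed d)) d = m d := by
      intro d
      have h1 : μ d = ∑ e' ∈ G.edgeFinset.attach, (l e') d := by
        rw [← hl.1]
        exact (Finsupp.finset_sum_apply _ _ _)
      rw [hμ] at h1
      rw [h1, Finset.sum_eq_single (ed d)]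
      · intro e' _ hne
        apply hsupp
        intro hd
        exact hne (hedeq e' d hd).symm
      · intro h
        exact absurd (Finset.mem_attach _ _) h
    have hma : (l e) (a e) = m (a e) := by
      have := heval (a e)
      rwa [hedeq e (a e) (Or.inl rfl)] at this
    have hmb : (l e) ((a e).symm) = m ((a e).symm) := by
      have := heval ((a e).symm)
      rwa [hedeq e _ (Or.inr rfl)] at this
    refine ⟨?_, ?_⟩
    · rw [hl₀, (hterm e).1, hma, hmb]
    · rw [← hma, ← hmb]; exact (hterm e).2
  -- there is a nonvanishing term
  obtain ⟨l, hlmem, hlne⟩ := Finset.exists_ne_zero_of_sum_ne_zero (hPc ▸ hcoeff)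
  have hbal : ∀ e, m (a e) + m (a e).symm = k e.1 := fun e => (hkey l hlmem hlne e).2
  have hleq : l = l₀ := Finsupp.ext fun e => (hkey l hlmem hlne e).1
  -- balanced weighting
  have hdart : ∀ d : G.Dart, m d + m d.symm = k d.edge := by
    intro d
    have hb := hbal (ed d)
    have hedge : k (ed d).1 = k d.edge := rfl
    rw [hedge] at hb
    rcases hclass d with hd | hd
    · rw [← hd] at hb
      exact hb
    · have hds : d.symm = a (ed d) := by
        conv_lhs => rw [hd, SimpleGraph.Dart.symm_symm]
      rw [← hds, SimpleGraph.Dart.symm_symm] at hb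
      omega
  refine ⟨⟨hdart, hvert⟩, ?_⟩
  -- l₀ is in the antidiagonal
  have hl₀mem : l₀ ∈ Finset.finsuppAntidiag G.edgeFinset.attach μ := by
    rw [Finset.mem_finsuppAntidiag]
    constructor
    · apply Finsupp.ext
      intro d
      rw [Finsupp.finset_sum_apply, hμ, Finset.sum_eq_single (ed d)]
      · rw [hl₀, hl0val, if_pos (hclass d)]
      · intro e' _ hne
        rw [hl₀, hl0val, if_neg]
        intro hd
        exact hne (hedeq e' d hd).symm
      · intro h
        exact absurd (Finset.mem_attach _ _) h
    · intro e _
      exact Finset.mem_attach _ _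
  rw [hPc, Finset.sum_eq_single_of_mem l₀ hl₀mem]
  · apply Finset.prod_congr rfl
    intro e _
    rw [my_coeff_binom_pow (hab e), if_pos, hl₀, hl0val, if_pos (Or.inl rfl)]
    constructor
    · conv_lhs => rw [hl₀]
      rw [hl₀, hl0val, hl0val, if_pos (Or.inl rfl), if_pos (Or.inr rfl)]
    · rw [hl₀, hl0val, hl0val, if_pos (Or.inl rfl), if_pos (Or.inr rfl)]
      exact hbal e
  · intro l' hl'mem hl'ne
    by_contra hcon
    exact hl'ne (Finsupp.ext fun e => (hkey l' hl'mem hcon e).1)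
end

section
/- Let T be a stable tree on a finite set S with |S| ≥ 3, and let S = X ⊔ Y be a partition of S into two nonempty blocks. Suppose that for every internal edge e of T, the split {A_e, B_e} of e is compatible with {X, Y}. Then there exists an internal vertex v of T such that every connected component of T − v (the graph obtained by deleting v and its incident edges) contains leaves only from X or only from Y. -/
open scoped Classical

/-- A *stable tree* on a finite set `S` is a finite tree (finite connected acyclic simple
graph) whose degree-1 vertices (leaves) are labeled bijectively by `S`, and whose internal
(non-leaf) vertices all have degree at least `3`. -/
structure StableTree (S : Type) where
  /-- The vertex set of the tree. -/
  V : Type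
  /-- The tree has finitely many vertices. -/
  finiteV : Finite V
  /-- The underlying simple graph. -/
  G : SimpleGraph V
  /-- The graph is a tree: connected and acyclic. -/
  isTree : G.IsTree
  /-- The labeling of the leaves by elements of `S`. -/
  leaf : S → V
  /-- The labeling is injective. -/
  leaf_injective : Function.Injective leaf
  /-- Every labeled vertex has degree `1`. -/
  degree_leaf : ∀ s : S, (G.neighborSet (leaf s)).ncard = 1
  /-- Every degree-1 vertex is labeled: the labeling is onto the leaves. -/
  leaf_of_degree_one : ∀ v : V, (G.neighborSet v).ncard = 1 → ∃ s, leaf s = v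
  /-- Every internal (unlabeled) vertex has degree at least `3`. -/
  three_le_degree_internal : ∀ v : V, (¬∃ s, leaf s = v) → 3 ≤ (G.neighborSet v).ncard

/-- A vertex of a stable tree is *internal* if it is not a leaf (not labeled). -/
def StableTree.Internal {S : Type} (T : StableTree S) (v : T.V) : Prop :=
  ¬∃ s, T.leaf s = v

/-- For adjacent vertices `a, b` of a stable tree `T` on `S`, the side of the split of the
edge `{a, b}` corresponding to `a`: the set of labels whose leaves lie in the connected
component of `a` after deleting the edge `{a, b}`. -/
def StableTree.splitSide {S : Type} (T : StableTree S) (a b : T.V) : Set S :=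
  {s | (T.G.deleteEdges {s(a, b)}).Reachable (T.leaf s) a}

/-- Two (ordered) splits `{A, B}` and `{X, Y}` of `S` are *compatible* if at least one of
the four intersections `A ∩ X`, `A ∩ Y`, `B ∩ X`, `B ∩ Y` is empty. -/
def SplitCompatible {S : Type} (p q : Set S × Set S) : Prop :=
  p.1 ∩ q.1 = ∅ ∨ p.1 ∩ q.2 = ∅ ∨ p.2 ∩ q.1 = ∅ ∨ p.2 ∩ q.2 = ∅

/-- The collection of splits of internal edges of a stable tree, recorded as ordered pairs
(both orderings of each split occur). -/
def StableTree.internalSplits {S : Type} (T : StableTree S) : Set (Set S × Set S) :=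
  {p | ∃ a b : T.V, T.G.Adj a b ∧ T.Internal a ∧ T.Internal b ∧
    p = (T.splitSide a b, T.splitSide b a)}

/-- The number of internal edges of a stable tree. -/
noncomputable def StableTree.internalEdgeCount {S : Type} (T : StableTree S) : ℕ :=
  {e : Sym2 T.V | e ∈ T.G.edgeSet ∧ ∀ v ∈ e, T.Internal v}.ncard

section AuxGraph

open SimpleGraph

variable {V : Type} {G : SimpleGraph V}

private lemma aux_bridge (hT : G.IsTree) {a b : V} (hab : G.Adj a b) :
    ¬ (G.deleteEdges {s(a, b)}).Reachable a b :=
  ((isBridge_iff).mp ((isAcyclic_iff_forall_adj_isBridge.mp hT.IsAcyclic) hab))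

private lemma aux_part {a b : V} : ∀ {x : V}, G.Walk x a →
    (G.deleteEdges {s(a, b)}).Reachable x a ∨ (G.deleteEdges {s(a, b)}).Reachable x b
  | _, SimpleGraph.Walk.nil => Or.inl (Reachable.refl _)
  | x, @SimpleGraph.Walk.cons _ _ _ y _ h q => by
    by_cases hxy : s(x, y) = s(a, b)
    · rw [Sym2.eq_iff] at hxy
      rcases hxy with ⟨h1, h2⟩ | ⟨h1, h2⟩
      · subst h1; exact Or.inl (Reachable.refl _)
      · subst h1; exact Or.inr (Reachable.refl _)
    · have hadj : (G.deleteEdges {s(a, b)}).Adj x y := by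
        rw [deleteEdges_adj]
        exact ⟨h, by simpa using hxy⟩
      rcases aux_part q with h1 | h1
      · exact Or.inl (hadj.reachable.trans h1)
      · exact Or.inr (hadj.reachable.trans h1)

private lemma aux_mono (hT : G.IsTree) {u v w : V} (huv : G.Adj u v) (huw : G.Adj u w)
    (hvw : v ≠ w) {x : V} (hx : (G.deleteEdges {s(w, u)}).Reachable x w) :
    (G.deleteEdges {s(u, v)}).Reachable x u := by
  obtain ⟨q⟩ := hx
  have hu : u ∉ q.support := by
    intro hu
    refine aux_bridge hT huw.symm ⟨?_⟩
    exact (q.dropUntil u hu).reverse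
  let p : G.Walk x w := q.map (SimpleGraph.Hom.ofLE (G.deleteEdges_le _))
  have hup : u ∉ p.support := by
    simp only [p, Walk.support_map, List.mem_map]
    rintro ⟨a, ha, hfa⟩
    rw [Hom.ofLE_apply] at hfa
    subst hfa
    exact hu ha
  have he : s(u, v) ∉ p.edges := fun h => hup (p.fst_mem_support_of_mem_edges h)
  have hadj : (G.deleteEdges {s(u, v)}).Adj w u := by
    rw [deleteEdges_adj]
    refine ⟨huw.symm, ?_⟩
    intro hmem
    rw [Set.mem_singleton_iff, Sym2.eq_iff] at hmem
    rcases hmem with ⟨h1, h2⟩ | ⟨h1, h2⟩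
    · exact huw.ne h1.symm
    · exact hvw h1.symm
  exact Reachable.trans ⟨p.toDeleteEdge _ he⟩ hadj.reachable

private lemma aux_isolated {a b x : V} (hnb : G.neighborSet a = {b})
    (hx : (G.deleteEdges {s(a, b)}).Reachable x a) : x = a := by
  obtain ⟨q⟩ := hx.symm
  cases q with
  | nil => rfl
  | cons h r =>
    exfalso
    rename_i y
    obtain ⟨h1, h2⟩ := deleteEdges_adj.mp h
    have hy : y ∈ G.neighborSet a := h1
    rw [hnb, Set.mem_singleton_iff] at hy
    subst hy
    exact h2 rfl

private lemma aux_pen (hT : G.IsTree) {x v : V} (hxv : x ≠ v) :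
    ∃ u, G.Adj u v ∧ (G.deleteEdges {s(u, v)}).Reachable x u := by
  obtain ⟨w⟩ := hT.isConnected.preconnected v x
  obtain ⟨p, hp⟩ : ∃ p : G.Walk v x, p.IsPath := ⟨w.toPath.1, w.toPath.2⟩
  cases p with
  | nil => exact absurd rfl hxv
  | cons h r =>
    rename_i u
    rw [Walk.cons_isPath_iff] at hp
    have hv : v ∉ r.reverse.support := by
      rw [Walk.support_reverse, List.mem_reverse]
      exact hp.2
    have he : s(u, v) ∉ r.reverse.edges :=
      fun hmem => hv (Walk.snd_mem_support_of_mem_edges _ hmem)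
    exact ⟨u, h.symm, ⟨r.reverse.toDeleteEdge _ he⟩⟩

private lemma aux_ind {v x y : V} {hx : x ≠ v} {hy : y ≠ v}
    (h : (G.induce {u | u ≠ v}).Reachable ⟨x, hx⟩ ⟨y, hy⟩) (a : V) :
    (G.deleteEdges {s(a, v)}).Reachable x y := by
  obtain ⟨q⟩ := h
  let f : G.induce {u | u ≠ v} →g G := ⟨Subtype.val, fun hab => hab⟩
  let p : G.Walk x y := q.map f
  have hv : v ∉ p.support := by
    simp only [p, Walk.support_map, List.mem_map]
    rintro ⟨z, _, hz⟩
    exact z.2 hz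
  have he : s(a, v) ∉ p.edges :=
    fun hmem => hv (Walk.snd_mem_support_of_mem_edges _ hmem)
  exact ⟨p.toDeleteEdge _ he⟩

end AuxGraph

section StableTreeAux

open SimpleGraph

variable {S : Type}

/-- A set of labels is monochromatic for the partition `X, Y`. -/
def MonoSide (X Y A : Set S) : Prop := A ∩ X = ∅ ∨ A ∩ Y = ∅

/-- The set of vertices on the `a`-side of the edge `{a, b}`. -/
def Comp (T : StableTree S) (a b : T.V) : Set T.V :=
  {x | (T.G.deleteEdges {s(a, b)}).Reachable x a}

private lemma leaf_nbr (T : StableTree S) {t : S} {b : T.V} (h : T.G.Adj (T.leaf t) b) :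
    T.G.neighborSet (T.leaf t) = {b} := by
  obtain ⟨c, hc⟩ := Set.ncard_eq_one.mp (T.degree_leaf t)
  have hb : b ∈ T.G.neighborSet (T.leaf t) := h
  rw [hc, Set.mem_singleton_iff] at hb
  rw [hc, hb]

private lemma splitSide_leaf (T : StableTree S) {t : S} {b : T.V}
    (h : T.G.Adj (T.leaf t) b) : T.splitSide (T.leaf t) b = {t} := by
  ext s
  simp only [StableTree.splitSide, Set.mem_setOf_eq, Set.mem_singleton_iff]
  constructor
  · intro hr
    exact T.leaf_injective (aux_isolated (leaf_nbr T h) hr)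
  · rintro rfl
    exact SimpleGraph.Reachable.refl _

private lemma mono_leaf (T : StableTree S) (X Y : Set S) (hXY : X ∪ Y = Set.univ)
    (hdisj : X ∩ Y = ∅) {w u : T.V} (hwu : T.G.Adj w u) (hw : ¬ T.Internal w) :
    MonoSide X Y (T.splitSide w u) := by
  rw [StableTree.Internal, not_not] at hw
  obtain ⟨t, rfl⟩ := hw
  rw [splitSide_leaf T hwu]
  have ht : t ∈ X ∪ Y := by rw [hXY]; trivial
  rcases ht with ht | ht
  · right
    rw [Set.eq_empty_iff_forall_notMem]
    rintro s ⟨hs1, hs2⟩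
    rw [Set.mem_singleton_iff] at hs1
    subst hs1
    have hmem : s ∈ X ∩ Y := ⟨ht, hs2⟩
    rw [hdisj] at hmem
    exact hmem
  · left
    rw [Set.eq_empty_iff_forall_notMem]
    rintro s ⟨hs1, hs2⟩
    rw [Set.mem_singleton_iff] at hs1
    subst hs1
    have hmem : s ∈ X ∩ Y := ⟨hs2, ht⟩
    rw [hdisj] at hmem
    exact hmem

private lemma sink (T : StableTree S) (X Y : Set S)
    (hXY : X ∪ Y = Set.univ) (hdisj : X ∩ Y = ∅)
    (hcomp : ∀ a b : T.V, T.G.Adj a b → T.Internal a → T.Internal b →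
      SplitCompatible (T.splitSide a b, T.splitSide b a) (X, Y)) :
    ∀ n : ℕ, ∀ u v : T.V, T.G.Adj u v → T.Internal u → T.Internal v →
      ¬ MonoSide X Y (T.splitSide u v) → (Comp T u v).ncard ≤ n →
      ∃ w, T.Internal w ∧ ∀ z, T.G.Adj z w → MonoSide X Y (T.splitSide z w) := by
  haveI := T.finiteV
  intro n
  induction n with
  | zero =>
    intro u v huv hu hv hnm hn
    exfalso
    have humem : u ∈ Comp T u v := SimpleGraph.Reachable.refl _
    have : Comp T u v = ∅ := by
      rw [← Set.ncard_eq_zero (Set.toFinite _)]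
      omega
    rw [this] at humem
    exact humem
  | succ n ih =>
    intro u v huv hu hv hnm hn
    by_cases hgood : ∀ z, T.G.Adj z u → MonoSide X Y (T.splitSide z u)
    · exact ⟨u, hu, hgood⟩
    · push_neg at hgood
      obtain ⟨w, hwu, hwm⟩ := hgood
      have hw : T.Internal w := by
        by_contra hcon
        exact hwm (mono_leaf T X Y hXY hdisj hwu hcon)
      have hmvu : MonoSide X Y (T.splitSide v u) := by
        rcases hcomp u v huv hu hv with h | h | h | h
        · exact absurd (Or.inl h) hnm
        · exact absurd (Or.inr h) hnm
        · exact Or.inl h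
        · exact Or.inr h
      have hvw : v ≠ w := fun h => hwm (h ▸ hmvu)
      have hsub : Comp T w u ⊆ Comp T u v := fun x hx =>
        aux_mono T.isTree huv hwu.symm hvw hx
      have humem : u ∈ Comp T u v := SimpleGraph.Reachable.refl _
      have hunot : u ∉ Comp T w u := fun h =>
        aux_bridge T.isTree hwu (SimpleGraph.Reachable.symm h)
      have hlt : (Comp T w u).ncard < (Comp T u v).ncard :=
        Set.ncard_lt_ncard ⟨hsub, fun hsup => hunot (hsup humem)⟩ (Set.toFinite _)
      exact ih w u hwu hw hu hwm (by omega)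

end StableTreeAux

/-- Let `T` be a stable tree on a finite set `S` with `|S| ≥ 3`, and let `S = X ⊔ Y` be a
partition into two nonempty blocks.  If the split of every internal edge of `T` is
compatible with `{X, Y}`, then there is an internal vertex `v` of `T` such that every
connected component of `T - v` contains leaves only from `X` or only from `Y`. -/
theorem exists_internal_vertex_of_compatible_partition {S : Type} [Fintype S]
    (hS : 3 ≤ Fintype.card S) (T : StableTree S)
    (X Y : Set S) (hXY : X ∪ Y = Set.univ) (hdisj : X ∩ Y = ∅)
    (hX : X.Nonempty) (hY : Y.Nonempty)
    (hcomp : ∀ a b : T.V, T.G.Adj a b → T.Internal a → T.Internal b →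
      SplitCompatible (T.splitSide a b, T.splitSide b a) (X, Y)) :
    ∃ v : T.V, T.Internal v ∧
      ∀ (s s' : S) (hs : T.leaf s ≠ v) (hs' : T.leaf s' ≠ v),
        (T.G.induce {u | u ≠ v}).Reachable ⟨T.leaf s, hs⟩ ⟨T.leaf s', hs'⟩ →
        (s ∈ X ↔ s' ∈ X) := by
  classical
  haveI := T.finiteV
  open SimpleGraph in
  -- pick a label and the unique neighbor of its leaf
  have hne : Nonempty S := Fintype.card_pos_iff.mp (by omega)
  obtain ⟨s0⟩ := hne
  obtain ⟨b0, hb0⟩ := Set.ncard_eq_one.mp (T.degree_leaf s0)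
  have hadj0 : T.G.Adj (T.leaf s0) b0 := by
    have hmem : b0 ∈ T.G.neighborSet (T.leaf s0) := by rw [hb0]; rfl
    exact hmem
  -- b0 is internal
  have hint0 : T.Internal b0 := by
    by_contra hcon
    rw [StableTree.Internal, not_not] at hcon
    obtain ⟨t, rfl⟩ := hcon
    have hall : ∀ s : S, s = s0 ∨ s = t := by
      intro s
      obtain ⟨p⟩ := T.isTree.isConnected.preconnected (T.leaf s) (T.leaf s0)
      rcases aux_part (G := T.G) (b := T.leaf t) p with h | h
      · exact Or.inl (T.leaf_injective (aux_isolated (leaf_nbr T hadj0) h))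
      · rw [Sym2.eq_swap] at h
        exact Or.inr (T.leaf_injective (aux_isolated (leaf_nbr T hadj0.symm) h))
    have hcard : (Set.univ : Set S).ncard ≤ 2 := by
      have hsub : (Set.univ : Set S) ⊆ {s0, t} := by
        intro s _
        rcases hall s with rfl | rfl
        · exact Set.mem_insert _ _
        · exact Set.mem_insert_of_mem _ rfl
      calc (Set.univ : Set S).ncard ≤ ({s0, t} : Set S).ncard :=
            Set.ncard_le_ncard hsub (Set.toFinite _)
        _ ≤ ({t} : Set S).ncard + 1 := Set.ncard_insert_le _ _
        _ ≤ 2 := by rw [Set.ncard_singleton]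
    rw [Set.ncard_univ, Nat.card_eq_fintype_card] at hcard
    omega
  -- find a good vertex
  have hfind : ∃ w, T.Internal w ∧ ∀ z, T.G.Adj z w → MonoSide X Y (T.splitSide z w) := by
    by_cases hgood : ∀ z, T.G.Adj z b0 → MonoSide X Y (T.splitSide z b0)
    · exact ⟨b0, hint0, hgood⟩
    · push_neg at hgood
      obtain ⟨u, hu_adj, hu_nm⟩ := hgood
      have hu_int : T.Internal u := by
        by_contra h
        exact hu_nm (mono_leaf T X Y hXY hdisj hu_adj h)
      exact sink T X Y hXY hdisj hcomp (Comp T u b0).ncard u b0 hu_adj hu_int hint0 hu_nm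
        le_rfl
  obtain ⟨v, hv_int, hv_good⟩ := hfind
  refine ⟨v, hv_int, ?_⟩
  intro s s' hs hs' hreach
  obtain ⟨u, hu_adj, hu_side⟩ := aux_pen T.isTree hs
  have hreach' : (T.G.deleteEdges {s(u, v)}).Reachable (T.leaf s) (T.leaf s') :=
    aux_ind hreach u
  have hs'_side : (T.G.deleteEdges {s(u, v)}).Reachable (T.leaf s') u :=
    hreach'.symm.trans hu_side
  have hsS : s ∈ T.splitSide u v := hu_side
  have hs'S : s' ∈ T.splitSide u v := hs'_side
  rcases hv_good u hu_adj with hmono | hmono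
  · have h1 : s ∉ X := fun h => Set.eq_empty_iff_forall_notMem.mp hmono s ⟨hsS, h⟩
    have h2 : s' ∉ X := fun h => Set.eq_empty_iff_forall_notMem.mp hmono s' ⟨hs'S, h⟩
    simp [h1, h2]
  · have hu1 : s ∈ X ∪ Y := by rw [hXY]; trivial
    have hu2 : s' ∈ X ∪ Y := by rw [hXY]; trivial
    have h1 : s ∈ X := by
      rcases hu1 with h | h
      · exact h
      · exact absurd (⟨hsS, h⟩ : s ∈ T.splitSide u v ∩ Y)
          (Set.eq_empty_iff_forall_notMem.mp hmono s)
    have h2 : s' ∈ X := by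
      rcases hu2 with h | h
      · exact h
      · exact absurd (⟨hs'S, h⟩ : s' ∈ T.splitSide u v ∩ Y)
          (Set.eq_empty_iff_forall_notMem.mp hmono s')
    simp [h1, h2]
end

section
/- Let T be a stable tree on a finite set S, and let S = X ⊔ Y be a partition of S with |X| ≥ 2 and |Y| ≥ 2. Suppose that for every internal edge e of T, the split of e is compatible with {X, Y}. Then there exists a stable tree T' on S whose collection of internal-edge splits contains the split {X, Y} as well as every internal-edge split of T, and whose number of internal edges is at most one more than that of T. -/
open scoped Classical

namespace SplitAux

variable {V : Type} {G : SimpleGraph V}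

lemma part_eq {α : Type} {A B A' B' : Set α} (hA : A ⊆ A') (hB : B ⊆ B')
    (tot : ∀ x, x ∈ A ∪ B) (dis : ∀ x, x ∈ A' → x ∈ B' → False) : A' = A ∧ B' = B := by
  constructor
  · apply Set.Subset.antisymm _ hA
    intro x hx
    rcases tot x with h | h
    · exact h
    · exact absurd (hB h) (fun hh => dis x hx hh)
  · apply Set.Subset.antisymm _ hB
    intro x hx
    rcases tot x with h | h
    · exact absurd (hA h) (fun hh => dis x hh hx)
    · exact h

lemma bridge (hA : G.IsAcyclic) {a b : V} (hab : G.Adj a b) :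
    ¬ (G.deleteEdges {s(a, b)}).Reachable a b := by
  have h := (SimpleGraph.isAcyclic_iff_forall_edge_isBridge.mp hA) (e := s(a,b))
    (hab : s(a,b) ∈ G.edgeSet)
  rw [SimpleGraph.isBridge_iff] at h
  exact h

lemma reach_or (hP : G.Preconnected) {a b : V} (_hab : G.Adj a b) (x : V) :
    (G.deleteEdges {s(a, b)}).Reachable x a ∨ (G.deleteEdges {s(a, b)}).Reachable x b := by
  obtain ⟨p⟩ := hP x a
  have key : ∀ {x y : V} (_p : G.Walk x y),
      ((G.deleteEdges {s(a, b)}).Reachable y a ∨ (G.deleteEdges {s(a, b)}).Reachable y b) →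
      ((G.deleteEdges {s(a, b)}).Reachable x a ∨ (G.deleteEdges {s(a, b)}).Reachable x b) := by
    intro x y p
    induction p with
    | nil => exact id
    | @cons x z _ h q ih =>
      intro hy
      rcases ih hy with hz | hz
      all_goals {
        by_cases he : s(x, z) = s(a, b)
        · rw [Sym2.eq_iff] at he
          rcases he with ⟨rfl, rfl⟩ | ⟨rfl, rfl⟩
          · exact Or.inl (SimpleGraph.Reachable.refl _)
          · exact Or.inr (SimpleGraph.Reachable.refl _)
        · first
          | exact Or.inl ((SimpleGraph.Adj.reachable (by simp [h, he])).trans hz)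
          | exact Or.inr ((SimpleGraph.Adj.reachable (by simp [h, he])).trans hz) }
  exact key p (Or.inl (SimpleGraph.Reachable.refl _))

lemma not_reach_both (hA : G.IsAcyclic) {a b x : V} (hab : G.Adj a b)
    (h1 : (G.deleteEdges {s(a, b)}).Reachable x a)
    (h2 : (G.deleteEdges {s(a, b)}).Reachable x b) : False :=
  bridge hA hab (h1.symm.trans h2)

lemma reach_step (hA : G.IsAcyclic) {a b c x : V} (hab : G.Adj a b) (hbc : G.Adj b c)
    (hac : a ≠ c) (hx : (G.deleteEdges {s(a, b)}).Reachable x a) :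
    (G.deleteEdges {s(b, c)}).Reachable x b := by
  obtain ⟨p⟩ := hx
  by_cases hbp : b ∈ p.support
  · exact absurd (p.dropUntil b hbp).reachable.symm (bridge hA hab)
  · have hne : ∀ e ∈ p.edges, e ∈ (G.deleteEdges {s(b, c)}).edgeSet := by
      intro e he
      have h1 : e ∈ (G.deleteEdges {s(a, b)}).edgeSet := p.edges_subset_edgeSet he
      rw [SimpleGraph.edgeSet_deleteEdges] at h1 ⊢
      refine ⟨h1.1, ?_⟩
      intro hbc'
      rw [Set.mem_singleton_iff] at hbc'
      subst hbc'
      exact hbp (p.fst_mem_support_of_mem_edges he)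
    have hq := p.transfer _ hne
    have hedge : (G.deleteEdges {s(b, c)}).Adj a b := by
      simp only [SimpleGraph.deleteEdges_adj, Set.mem_singleton_iff]
      refine ⟨hab, ?_⟩
      intro h
      rw [Sym2.eq_iff] at h
      rcases h with ⟨rfl, rfl⟩ | ⟨rfl, -⟩
      · exact G.irrefl hab
      · exact hac rfl
    exact hq.reachable.trans hedge.reachable

lemma branch (hP : G.Preconnected) {v x : V} (hx : x ≠ v) :
    ∃ u, G.Adj v u ∧ (G.deleteEdges {s(u, v)}).Reachable x u := by
  obtain ⟨p⟩ := hP x v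
  have key : ∀ {x y : V} (_p : G.Walk x y), y = v → x ≠ v →
      ∃ u, G.Adj v u ∧ (G.deleteEdges {s(u, v)}).Reachable x u := by
    intro x y p
    induction p with
    | nil => intro h1 h2; exact absurd h1 h2
    | @cons x z _ h q ih =>
      intro hy hxv
      by_cases hzv : z = v
      · subst hzv
        exact ⟨x, h.symm, SimpleGraph.Reachable.refl _⟩
      · obtain ⟨u, hu, hr⟩ := ih hy hzv
        refine ⟨u, hu, SimpleGraph.Reachable.trans ?_ hr⟩
        refine SimpleGraph.Adj.reachable ?_
        simp only [SimpleGraph.deleteEdges_adj, Set.mem_singleton_iff]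
        refine ⟨h, ?_⟩
        intro he
        rw [Sym2.eq_iff] at he
        rcases he with ⟨rfl, rfl⟩ | ⟨rfl, rfl⟩
        · exact hzv rfl
        · exact hxv rfl
  exact key p rfl hx

lemma branch_disjoint (hA : G.IsAcyclic) {v u u' x : V} (h1 : G.Adj v u) (h2 : G.Adj v u')
    (hne : u ≠ u') (hr : (G.deleteEdges {s(u, v)}).Reachable x u)
    (hr' : (G.deleteEdges {s(u', v)}).Reachable x u') : False := by
  have hstep : (G.deleteEdges {s(v, u')}).Reachable x v :=
    reach_step hA h1.symm h2 hne hr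
  have hr'' : (G.deleteEdges {s(v, u')}).Reachable x u' := by
    rwa [Sym2.eq_swap (a := u') (b := v)] at hr'
  exact not_reach_both hA h2 hstep hr''

/-! ### The extended graph -/

def ExtGraph (G : SimpleGraph V) (v : V) (N : Set V) : SimpleGraph (Option V) where
  Adj p q :=
    match p, q with
    | some a, some b => G.Adj a b ∧ ¬(a = v ∧ b ∈ N) ∧ ¬(b = v ∧ a ∈ N)
    | some a, none => a = v ∨ a ∈ N
    | none, some b => b = v ∨ b ∈ N
    | none, none => False
  symm := by
    constructor
    rintro (_ | a) (_ | b) h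
    · exact h
    · exact h
    · exact h
    · exact ⟨h.1.symm, h.2.2, h.2.1⟩
  loopless := by
    constructor
    rintro (_ | a) h
    · exact h
    · exact G.irrefl h.1

variable {G : SimpleGraph V} {v : V} {N : Set V}

@[simp] lemma extGraph_adj_some_some {a b : V} :
    (ExtGraph G v N).Adj (some a) (some b) ↔
      G.Adj a b ∧ ¬(a = v ∧ b ∈ N) ∧ ¬(b = v ∧ a ∈ N) := Iff.rfl
@[simp] lemma extGraph_adj_some_none {a : V} :
    (ExtGraph G v N).Adj (some a) none ↔ a = v ∨ a ∈ N := Iff.rfl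
@[simp] lemma extGraph_adj_none_some {b : V} :
    (ExtGraph G v N).Adj none (some b) ↔ b = v ∨ b ∈ N := Iff.rfl
@[simp] lemma extGraph_adj_none_none :
    ¬ (ExtGraph G v N).Adj none none := fun h => h

lemma extGraph_proj (hN : ∀ u ∈ N, G.Adj v u) (F : Set (Sym2 (Option V))) (E : Set (Sym2 V))
    (h1 : ∀ a b : V, (ExtGraph G v N).Adj (some a) (some b) → s(some a, some b) ∉ F →
      s(a, b) ∉ E)
    (h2 : ∀ u ∈ N, s((some u : Option V), none) ∉ F → s(u, v) ∉ E)
    {p q : Option V} (h : ((ExtGraph G v N).deleteEdges F).Reachable p q) :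
    (G.deleteEdges E).Reachable (p.getD v) (q.getD v) := by
  obtain ⟨w⟩ := h
  induction w with
  | nil => exact SimpleGraph.Reachable.refl _
  | @cons p r _ h w ih =>
    refine SimpleGraph.Reachable.trans ?_ ih
    rw [SimpleGraph.deleteEdges_adj] at h
    obtain ⟨hadj, hF⟩ := h
    match p, r with
    | some a, some b =>
      refine SimpleGraph.Adj.reachable ?_
      rw [SimpleGraph.deleteEdges_adj]
      exact ⟨hadj.1, h1 a b hadj hF⟩
    | some a, none =>
      rcases (hadj : a = v ∨ a ∈ N) with rfl | haN
      · exact SimpleGraph.Reachable.refl _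
      · refine SimpleGraph.Adj.reachable ?_
        rw [SimpleGraph.deleteEdges_adj]
        exact ⟨(hN a haN).symm, h2 a haN hF⟩
    | none, some b =>
      rcases (hadj : b = v ∨ b ∈ N) with rfl | hbN
      · exact SimpleGraph.Reachable.refl _
      · refine SimpleGraph.Adj.reachable ?_
        rw [SimpleGraph.deleteEdges_adj]
        refine ⟨hN b hbN, ?_⟩
        have := h2 b hbN (by rwa [Sym2.eq_swap] at hF)
        rwa [Sym2.eq_swap]
    | none, none => exact absurd hadj (extGraph_adj_none_none)

lemma extGraph_lift {x y : V} (h : G.Reachable x y) :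
    (ExtGraph G v N).Reachable (some x) (some y) := by
  obtain ⟨w⟩ := h
  induction w with
  | nil => exact SimpleGraph.Reachable.refl _
  | @cons x z _ h w ih =>
    refine SimpleGraph.Reachable.trans ?_ ih
    by_cases h1 : (x = v ∧ z ∈ N) ∨ (z = v ∧ x ∈ N)
    · rcases h1 with ⟨hxv, hz⟩ | ⟨hzv, hx⟩
      · exact (SimpleGraph.Adj.reachable
            (show (ExtGraph G v N).Adj (some x) none from Or.inl hxv)).trans
          (SimpleGraph.Adj.reachable
            (show (ExtGraph G v N).Adj none (some z) from Or.inr hz))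
      · exact (SimpleGraph.Adj.reachable
            (show (ExtGraph G v N).Adj (some x) none from Or.inr hx)).trans
          (SimpleGraph.Adj.reachable
            (show (ExtGraph G v N).Adj none (some z) from Or.inl hzv))
    · push_neg at h1
      exact SimpleGraph.Adj.reachable (by
        rw [extGraph_adj_some_some]
        exact ⟨h, fun hh => (h1.1 hh.1) hh.2, fun hh => (h1.2 hh.1) hh.2⟩)

lemma extGraph_preconnected (hP : G.Preconnected) :
    (ExtGraph G v N).Preconnected := by
  have hnv : (ExtGraph G v N).Reachable none (some v) :=
    SimpleGraph.Adj.reachable (by simp)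
  rintro (_ | x) (_ | y)
  · exact SimpleGraph.Reachable.refl _
  · exact hnv.trans (extGraph_lift (hP v y))
  · exact (extGraph_lift (hP x v)).trans hnv.symm
  · exact extGraph_lift (hP x y)

def Comp (G : SimpleGraph V) (v : V) (N : Set V) : Set V :=
  {x | x = v ∨ ∃ u, G.Adj v u ∧ u ∉ N ∧ (G.deleteEdges {s(u, v)}).Reachable x u}

lemma not_mem_comp_of_mem (hA : G.IsAcyclic) (hN : ∀ u ∈ N, G.Adj v u) {x : V}
    (hx : x ∈ N) (hc : x ∈ Comp G v N) : False := by
  rcases hc with rfl | ⟨u, hu, huN, hr⟩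
  · exact G.irrefl (hN x hx)
  · exact branch_disjoint hA hu (hN x hx) (fun h => huN (h ▸ hx))
      hr (SimpleGraph.Reachable.refl _)

lemma extGraph_invariant (hA : G.IsAcyclic) (hN : ∀ u ∈ N, G.Adj v u) {p q : Option V}
    (h : ((ExtGraph G v N).deleteEdges {s((some v : Option V), none)}).Reachable p q)
    (hp : ∃ x, p = some x ∧ x ∈ Comp G v N) :
    ∃ y, q = some y ∧ y ∈ Comp G v N := by
  obtain ⟨w⟩ := h
  induction w with
  | nil => exact hp
  | @cons p r _ h w ih =>
    refine ih ?_
    obtain ⟨x, rfl, hx⟩ := hp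
    rw [SimpleGraph.deleteEdges_adj] at h
    obtain ⟨hadj, hF⟩ := h
    match r with
    | none =>
      exfalso
      rcases (hadj : x = v ∨ x ∈ N) with rfl | hxN
      · exact hF rfl
      · exact not_mem_comp_of_mem hA hN hxN hx
    | some y =>
      refine ⟨y, rfl, ?_⟩
      obtain ⟨hxy, hc1, hc2⟩ := (extGraph_adj_some_some).mp hadj
      rcases hx with rfl | ⟨u, hu, huN, hr⟩
      · exact Or.inr ⟨y, hxy, fun hyN => hc1 ⟨rfl, hyN⟩, SimpleGraph.Reachable.refl _⟩
      · by_cases hyv : y = v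
        · exact Or.inl hyv
        · have hxv : x ≠ v := by
            rintro rfl
            exact bridge hA hu.symm hr.symm
          refine Or.inr ⟨u, hu, huN, SimpleGraph.Reachable.trans ?_ hr⟩
          refine (SimpleGraph.Adj.reachable ?_).symm
          rw [SimpleGraph.deleteEdges_adj]
          refine ⟨hxy, ?_⟩
          intro he
          rw [Set.mem_singleton_iff, Sym2.eq_iff] at he
          rcases he with ⟨rfl, rfl⟩ | ⟨rfl, rfl⟩
          · exact hyv rfl
          · exact hxv rfl

lemma extGraph_isAcyclic (hA : G.IsAcyclic) (hN : ∀ u ∈ N, G.Adj v u) :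
    (ExtGraph G v N).IsAcyclic := by
  rw [SimpleGraph.isAcyclic_iff_forall_edge_isBridge]
  have hss : ∀ a b : V, (ExtGraph G v N).Adj (some a) (some b) →
      ¬ ((ExtGraph G v N).deleteEdges {s((some a : Option V), some b)}).Reachable
        (some a) (some b) := by
    intro a b hadj hreach
    obtain ⟨hab, hc1, hc2⟩ := (extGraph_adj_some_some).mp hadj
    have := extGraph_proj hN {s((some a : Option V), some b)} {s(a, b)}
      (fun x y _ hF hmem => by
        rw [Set.mem_singleton_iff, Sym2.eq_iff] at hmem
        rcases hmem with ⟨rfl, rfl⟩ | ⟨rfl, rfl⟩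
        · exact hF rfl
        · exact hF (Sym2.eq_swap))
      (fun u huN _ hmem => by
        rw [Set.mem_singleton_iff, Sym2.eq_iff] at hmem
        rcases hmem with ⟨h1, h2⟩ | ⟨h1, h2⟩
        · exact hc2 ⟨h2.symm, h1 ▸ huN⟩
        · exact hc1 ⟨h2.symm, h1 ▸ huN⟩) hreach
    exact bridge hA hab this
  have hsn : ∀ a : V, (ExtGraph G v N).Adj (some a) none →
      ¬ ((ExtGraph G v N).deleteEdges {s((some a : Option V), none)}).Reachable
        (some a) none := by
    intro a hadj hreach
    by_cases hav : a = v
    · subst hav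
      obtain ⟨y, hy, -⟩ := extGraph_invariant hA hN hreach ⟨_, rfl, Or.inl rfl⟩
      exact Option.some_ne_none _ hy.symm
    · have haN : a ∈ N := (hadj : a = v ∨ a ∈ N).resolve_left hav
      have := extGraph_proj hN {s((some a : Option V), none)} {s(a, v)}
        (fun x y hxy hF hmem => by
          rw [Set.mem_singleton_iff, Sym2.eq_iff] at hmem
          rcases hmem with ⟨h1, h2⟩ | ⟨h1, h2⟩
          · exact hxy.2.2 ⟨h2, h1 ▸ haN⟩
          · exact hxy.2.1 ⟨h1, h2 ▸ haN⟩)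
        (fun u huN hF hmem => by
          rw [Set.mem_singleton_iff, Sym2.eq_iff] at hmem
          rcases hmem with ⟨h1, h2⟩ | ⟨h1, h2⟩
          · exact hF (by rw [h1]; exact rfl)
          · exact G.irrefl (h1 ▸ hN _ huN)) hreach
      exact bridge hA (hN a haN).symm this
  intro e he
  induction e using Sym2.ind with
  | _ p q =>
    rw [SimpleGraph.mem_edgeSet] at he
    rw [SimpleGraph.isBridge_iff]
    match p, q with
    | some a, some b => exact hss a b he
    | some a, none => exact hsn a he
    | none, some b =>
      rw [Sym2.eq_swap]
      intro h
      exact hsn b ((ExtGraph G v N).adj_symm he) h.symm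
    | none, none => exact absurd he extGraph_adj_none_none

lemma extGraph_lift_avoid (hA : G.IsAcyclic) {u x : V} (hu : G.Adj v u)
    (hx : (G.deleteEdges {s(u, v)}).Reachable x u) :
    ((ExtGraph G v N).deleteEdges {s((some v : Option V), none)}).Reachable (some x) (some u) := by
  obtain ⟨p⟩ := hx
  have hvs : v ∉ p.support := by
    intro h
    exact bridge hA hu.symm ((p.dropUntil v h).reachable).symm
  clear hu
  have key : ∀ {x y : V} (p : (G.deleteEdges {s(u, v)}).Walk x y), v ∉ p.support →
      ((ExtGraph G v N).deleteEdges
        {s((some v : Option V), none)}).Reachable (some x) (some y) := by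
    intro x y p
    induction p with
    | nil => intro _; exact SimpleGraph.Reachable.refl _
    | @cons x z _ h q ih =>
      intro hvs
      rw [SimpleGraph.Walk.support_cons, List.mem_cons] at hvs
      push_neg at hvs
      obtain ⟨hxv, hvq⟩ := hvs
      refine SimpleGraph.Reachable.trans ?_ (ih hvq)
      have hzv : z ≠ v := fun hh => hvq (hh ▸ q.start_mem_support)
      refine SimpleGraph.Adj.reachable ?_
      rw [SimpleGraph.deleteEdges_adj]
      constructor
      · rw [extGraph_adj_some_some]
        exact ⟨(SimpleGraph.deleteEdges_adj.mp h).1,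
          fun hh => (Ne.symm hxv) hh.1, fun hh => hzv hh.1⟩
      · intro hmem
        rw [Set.mem_singleton_iff, Sym2.eq_iff] at hmem
        rcases hmem with ⟨h1, h2⟩ | ⟨h1, h2⟩
        · exact Option.some_ne_none _ h2
        · exact Option.some_ne_none _ h1
  exact key p hvs

lemma extGraph_nbr_none :
    (ExtGraph G v N).neighborSet none = some '' (insert v N) := by
  ext (_ | b)
  · simp [SimpleGraph.neighborSet]
  · simp only [SimpleGraph.mem_neighborSet, extGraph_adj_none_some, Set.mem_image]
    constructor
    · rintro (rfl | hb)
      · exact ⟨b, Or.inl rfl, rfl⟩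
      · exact ⟨b, Or.inr hb, rfl⟩
    · rintro ⟨x, hx, hxb⟩
      cases Option.some_injective _ hxb
      rcases hx with rfl | hx
      · exact Or.inl rfl
      · exact Or.inr hx

lemma extGraph_nbr_some_v :
    (ExtGraph G v N).neighborSet (some v) = some '' (G.neighborSet v \ N) ∪ {none} := by
  ext (_ | b)
  · simp [SimpleGraph.neighborSet]
  · simp only [SimpleGraph.mem_neighborSet, extGraph_adj_some_some, Set.mem_union,
      Set.mem_image, Set.mem_diff, Set.mem_singleton_iff]
    constructor
    · rintro ⟨hadj, hc1, -⟩
      refine Or.inl ⟨b, ⟨hadj, fun hb => hc1 ⟨by trivial, hb⟩⟩, rfl⟩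
    · rintro (⟨x, ⟨hx1, hx2⟩, hxb⟩ | hb)
      · cases Option.some_injective _ hxb
        exact ⟨hx1, fun hh => hx2 hh.2, fun hh => G.irrefl (hh.1 ▸ hx1)⟩
      · exact absurd hb (Option.some_ne_none _)

lemma extGraph_nbr_some_mem {u : V} (huN : u ∈ N) (huv : u ≠ v) :
    (ExtGraph G v N).neighborSet (some u) = some '' (G.neighborSet u \ {v}) ∪ {none} := by
  ext (_ | b)
  · simp only [SimpleGraph.mem_neighborSet, extGraph_adj_some_none, Set.mem_union,
      Set.mem_singleton_iff]
    constructor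
    · intro _; exact Or.inr (by trivial)
    · intro _; exact Or.inr huN
  · simp only [SimpleGraph.mem_neighborSet, extGraph_adj_some_some, Set.mem_union,
      Set.mem_image, Set.mem_diff, Set.mem_singleton_iff]
    constructor
    · rintro ⟨hadj, -, hc2⟩
      exact Or.inl ⟨b, ⟨hadj, fun hb => hc2 ⟨hb, huN⟩⟩, rfl⟩
    · rintro (⟨x, ⟨hx1, hx2⟩, hxb⟩ | hb)
      · cases Option.some_injective _ hxb
        exact ⟨hx1, fun hh => huv hh.1, fun hh => hx2 hh.1⟩
      · exact absurd hb (Option.some_ne_none _)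

lemma extGraph_nbr_some_other {x : V} (hxN : x ∉ N) (hxv : x ≠ v) :
    (ExtGraph G v N).neighborSet (some x) = some '' G.neighborSet x := by
  ext (_ | b)
  · simp only [SimpleGraph.mem_neighborSet, extGraph_adj_some_none, Set.mem_image]
    constructor
    · rintro (rfl | h)
      · exact absurd rfl hxv
      · exact absurd h hxN
    · rintro ⟨y, -, hy⟩; exact absurd hy (Option.some_ne_none _)
  · simp only [SimpleGraph.mem_neighborSet, extGraph_adj_some_some, Set.mem_image]
    constructor
    · rintro ⟨hadj, -, -⟩
      exact ⟨b, hadj, rfl⟩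
    · rintro ⟨y, hy, hyb⟩
      cases Option.some_injective _ hyb
      exact ⟨hy, fun hh => hxv hh.1, fun hh => hxN hh.2⟩

lemma ncard_image_union_none [Finite V] {s : Set V} :
    (some '' s ∪ {none} : Set (Option V)).ncard = s.ncard + 1 := by
  rw [Set.union_singleton, Set.ncard_insert_of_notMem (by simp) (Set.toFinite _),
    Set.ncard_image_of_injective _ (Option.some_injective _)]


variable {S : Type} {T : StableTree S}

lemma reach_leaf_eq {V : Type} {G : SimpleGraph V} {c b x : V} (hnbr : G.neighborSet c = {b})
    (hx : (G.deleteEdges {s(c, b)}).Reachable x c) : x = c := by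
  obtain ⟨p⟩ := hx.symm
  cases p with
  | nil => rfl
  | cons h q =>
    exfalso
    rw [SimpleGraph.deleteEdges_adj] at h
    have : _ ∈ G.neighborSet c := h.1
    rw [hnbr, Set.mem_singleton_iff] at this
    subst this
    exact h.2 rfl

lemma splitSide_leaf {s₀ : S} {b : T.V} (hb : T.G.Adj (T.leaf s₀) b) :
    T.splitSide (T.leaf s₀) b = {s₀} := by
  have hfin := T.finiteV
  obtain ⟨c, hc⟩ := Set.ncard_eq_one.mp (T.degree_leaf s₀)
  have hbc : c = b := by
    have : b ∈ T.G.neighborSet (T.leaf s₀) := hb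
    rw [hc, Set.mem_singleton_iff] at this
    exact this.symm
  subst hbc
  ext s
  simp only [StableTree.splitSide, Set.mem_setOf_eq, Set.mem_singleton_iff]
  constructor
  · intro h
    exact T.leaf_injective (reach_leaf_eq hc h)
  · rintro rfl
    exact SimpleGraph.Reachable.refl _

lemma splitSide_total {a b : T.V} (hab : T.G.Adj a b) (s : S) :
    s ∈ T.splitSide a b ∨ s ∈ T.splitSide b a := by
  rcases reach_or T.isTree.1.preconnected hab (T.leaf s) with h | h
  · exact Or.inl h
  · right
    show (T.G.deleteEdges {s(b, a)}).Reachable (T.leaf s) b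
    rwa [Sym2.eq_swap]

lemma splitSide_disj {a b : T.V} (hab : T.G.Adj a b) {s : S}
    (h1 : s ∈ T.splitSide a b) (h2 : s ∈ T.splitSide b a) : False := by
  have h2' : (T.G.deleteEdges {s(a, b)}).Reachable (T.leaf s) b := by
    have := h2
    rwa [StableTree.splitSide, Set.mem_setOf_eq, Sym2.eq_swap] at this
  exact not_reach_both T.isTree.2 hab h1 h2'

lemma splitSide_nonempty {a b : T.V} (hab : T.G.Adj a b) : (T.splitSide a b).Nonempty := by
  have hfin := T.finiteV
  have key : ∀ (n : ℕ) (a b : T.V), T.G.Adj a b →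
      {x | (T.G.deleteEdges {s(a, b)}).Reachable x a}.ncard = n →
      ∃ s, (T.G.deleteEdges {s(a, b)}).Reachable (T.leaf s) a := by
    intro n
    induction n using Nat.strong_induction_on with
    | _ n ih =>
      intro a b hab hn
      by_cases hl : ∃ s, T.leaf s = a
      · obtain ⟨s, rfl⟩ := hl
        exact ⟨s, SimpleGraph.Reachable.refl _⟩
      · have hdeg := T.three_le_degree_internal a hl
        have hc : ∃ c, T.G.Adj a c ∧ c ≠ b := by
          by_contra hcon
          push_neg at hcon
          have hsub : T.G.neighborSet a ⊆ {b} := fun c hc => hcon c hc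
          have := Set.ncard_le_ncard hsub (Set.toFinite _)
          rw [Set.ncard_singleton] at this
          omega
        obtain ⟨c, hac, hcb⟩ := hc
        set A := {x | (T.G.deleteEdges {s(a, b)}).Reachable x a} with hA
        set C := {x | (T.G.deleteEdges {s(c, a)}).Reachable x c} with hC
        have hCA : C ⊆ A := fun x hx => reach_step T.isTree.2 hac.symm hab hcb hx
        have haA : a ∈ A := SimpleGraph.Reachable.refl _
        have haC : a ∉ C := fun h =>
          not_reach_both T.isTree.2 hac.symm h (SimpleGraph.Reachable.refl _)
        have hss : C ⊂ A := ⟨hCA, fun h => haC (h haA)⟩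
        have hlt : C.ncard < A.ncard := Set.ncard_lt_ncard hss (Set.toFinite _)
        obtain ⟨s, hs⟩ := ih C.ncard (by omega) c a hac.symm rfl
        exact ⟨s, hCA hs⟩
  obtain ⟨s, hs⟩ := key _ a b hab rfl
  exact ⟨s, hs⟩

end SplitAux

open SplitAux

/-- Let `T` be a stable tree on a finite set `S`, and let `S = X ⊔ Y` be a partition with
`|X| ≥ 2` and `|Y| ≥ 2`.  If the split of every internal edge of `T` is compatible with
`{X, Y}`, then there is a stable tree `T'` on `S` whose collection of internal-edge splits
contains the split `{X, Y}` and every internal-edge split of `T`, and which has at most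
one more internal edge than `T`. -/
theorem exists_stableTree_adding_split {S : Type} [Fintype S] (T : StableTree S)
    (X Y : Set S) (hXY : X ∪ Y = Set.univ) (hdisj : X ∩ Y = ∅)
    (hX : 2 ≤ X.ncard) (hY : 2 ≤ Y.ncard)
    (hcomp : ∀ a b : T.V, T.G.Adj a b → T.Internal a → T.Internal b →
      SplitCompatible (T.splitSide a b, T.splitSide b a) (X, Y)) :
    ∃ T' : StableTree S,
      (X, Y) ∈ T'.internalSplits ∧
      T.internalSplits ⊆ T'.internalSplits ∧
      T'.internalEdgeCount ≤ T.internalEdgeCount + 1 := by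
  classical
  haveI hfin := T.finiteV
  haveI : Fintype T.V := Fintype.ofFinite _
  obtain ⟨x₀, hx₀⟩ : X.Nonempty := Set.nonempty_of_ncard_ne_zero (by omega)
  obtain ⟨y₀, hy₀⟩ : Y.Nonempty := Set.nonempty_of_ncard_ne_zero (by omega)
  have hdis : ∀ s, s ∈ X → s ∈ Y → False := fun s h1 h2 => by
    have : s ∈ X ∩ Y := ⟨h1, h2⟩
    rw [hdisj] at this
    exact this
  have htot : ∀ s : S, s ∈ X ∨ s ∈ Y := fun s => by
    have : s ∈ X ∪ Y := by rw [hXY]; trivial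
    exact this
  have hA : T.G.IsAcyclic := T.isTree.2
  have hPre : T.G.Preconnected := T.isTree.1.preconnected
  have hsubY : ∀ {A : Set S}, A ∩ X = ∅ → A ⊆ Y := by
    intro A h s hs
    rcases htot s with h' | h'
    · exact absurd (show s ∈ A ∩ X from ⟨hs, h'⟩) (by rw [h]; exact id)
    · exact h'
  have hsubX : ∀ {A : Set S}, A ∩ Y = ∅ → A ⊆ X := by
    intro A h s hs
    rcases htot s with h' | h'
    · exact h'
    · exact absurd (show s ∈ A ∩ Y from ⟨hs, h'⟩) (by rw [h]; exact id)
  have hsingle : ∀ s₀ : S, ({s₀} : Set S) ⊆ X ∨ ({s₀} : Set S) ⊆ Y := by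
    intro s₀
    rcases htot s₀ with h | h
    · exact Or.inl (by simpa using h)
    · exact Or.inr (by simpa using h)
  have hmono : ∀ a b : T.V, T.G.Adj a b →
      (T.splitSide a b ⊆ X ∨ T.splitSide a b ⊆ Y) ∨
      (T.splitSide b a ⊆ X ∨ T.splitSide b a ⊆ Y) := by
    intro a b hab
    by_cases ha : T.Internal a
    · by_cases hb : T.Internal b
      · rcases hcomp a b hab ha hb with h | h | h | h
        · exact Or.inl (Or.inr (hsubY h))
        · exact Or.inl (Or.inl (hsubX h))
        · exact Or.inr (Or.inr (hsubY h))
        · exact Or.inr (Or.inl (hsubX h))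
      · rw [StableTree.Internal, not_not] at hb
        obtain ⟨s₀, rfl⟩ := hb
        right
        rw [splitSide_leaf hab.symm]
        exact hsingle s₀
    · rw [StableTree.Internal, not_not] at ha
      obtain ⟨s₀, rfl⟩ := ha
      left
      rw [splitSide_leaf hab]
      exact hsingle s₀
  -- Case 1: some edge of `T` already realizes the split (X, Y).
  by_cases hP : ∃ a b : T.V, T.G.Adj a b ∧ T.splitSide a b = X ∧ T.splitSide b a = Y
  · obtain ⟨a, b, hab, h1, h2⟩ := hP
    have ha : T.Internal a := by
      rintro ⟨s₀, rfl⟩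
      rw [splitSide_leaf hab] at h1
      have : X.ncard = 1 := by rw [← h1]; exact Set.ncard_singleton _
      omega
    have hb : T.Internal b := by
      rintro ⟨s₀, rfl⟩
      rw [splitSide_leaf hab.symm] at h2
      have : Y.ncard = 1 := by rw [← h2]; exact Set.ncard_singleton _
      omega
    exact ⟨T, ⟨a, b, hab, ha, hb, by rw [h1, h2]⟩, subset_rfl, Nat.le_succ _⟩
  -- Case 2
  have hstepT : ∀ {t₀ u₁ u₂ : T.V}, T.G.Adj t₀ u₁ → T.G.Adj t₀ u₂ → u₁ ≠ u₂ →
      T.splitSide u₁ t₀ ⊆ T.splitSide t₀ u₂ := by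
    intro t₀ u₁ u₂ h1 h2 hne s hs
    exact reach_step hA h1.symm h2 hne hs
  have hfull : ∀ a b : T.V, T.G.Adj a b → T.splitSide a b ⊆ X → T.splitSide b a ⊆ Y → False := by
    intro a b hab hXs hYs
    apply hP
    refine ⟨a, b, hab, ?_, ?_⟩
    · apply Set.Subset.antisymm hXs
      intro x hx
      rcases splitSide_total hab x with h | h
      · exact h
      · exact absurd (hYs h) (fun hy => hdis x hx hy)
    · apply Set.Subset.antisymm hYs
      intro y hy
      rcases splitSide_total hab y with h | h
      · exact absurd (hXs h) (fun hx => hdis y hx hy)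
      · exact h
  have hkey : ∀ t₀ u₁ u₂ : T.V, T.G.Adj t₀ u₁ → T.G.Adj t₀ u₂ → u₁ ≠ u₂ →
      (T.splitSide t₀ u₁ ⊆ X ∨ T.splitSide t₀ u₁ ⊆ Y) →
      (T.splitSide t₀ u₂ ⊆ X ∨ T.splitSide t₀ u₂ ⊆ Y) → False := by
    intro t₀ u₁ u₂ h1 h2 hne hm1 hm2
    have hsub12 : T.splitSide u₁ t₀ ⊆ T.splitSide t₀ u₂ := hstepT h1 h2 hne
    rcases hm1 with hm1 | hm1 <;> rcases hm2 with hm2 | hm2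
    · rcases splitSide_total h1 y₀ with h | h
      · exact hdis y₀ (hm1 h) hy₀
      · exact hdis y₀ (hm2 (hsub12 h)) hy₀
    · exact hfull t₀ u₁ h1 hm1 (fun s hs => hm2 (hsub12 hs))
    · exact hfull t₀ u₂ h2 hm2 (fun s hs => hm1 (hstepT h2 h1 (Ne.symm hne) hs))
    · rcases splitSide_total h1 x₀ with h | h
      · exact hdis x₀ hx₀ (hm1 h)
      · exact hdis x₀ hx₀ (hm2 (hsub12 h))
  have hchoice : ∀ e : T.G.edgeSet, ∃ t u : T.V, (e : Sym2 T.V) = s(t, u) ∧ T.G.Adj t u ∧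
      (T.splitSide t u ⊆ X ∨ T.splitSide t u ⊆ Y) := by
    rintro ⟨e, he⟩
    induction e using Sym2.ind with
    | _ a b =>
      rw [SimpleGraph.mem_edgeSet] at he
      rcases hmono a b he with h | h
      · exact ⟨a, b, rfl, he, h⟩
      · exact ⟨b, a, Sym2.eq_swap, he.symm, h⟩
  choose tl hd heq hadj hm using hchoice
  have hinj : Function.Injective tl := by
    intro e f hef
    by_contra hne
    have hne' : hd e ≠ hd f := by
      intro h
      apply hne
      apply Subtype.ext
      rw [show (e : Sym2 T.V) = s(tl e, hd e) from heq e,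
        show (f : Sym2 T.V) = s(tl f, hd f) from heq f, hef, h]
    exact hkey (tl e) (hd e) (hd f) (hadj e) (hef ▸ hadj f) hne' (hm e) (hef ▸ hm f)
  haveI : Nonempty T.V := ⟨T.leaf x₀⟩
  obtain ⟨v, hv⟩ : ∃ v : T.V, ∀ e : T.G.edgeSet, tl e ≠ v := by
    by_contra h
    push_neg at h
    have hsurj : Function.Surjective tl := fun v => h v
    have h1 : Fintype.card T.V ≤ Fintype.card T.G.edgeSet :=
      Fintype.card_le_of_surjective tl hsurj
    have h2 := T.isTree.card_edgeFinset
    rw [SimpleGraph.edgeFinset_card] at h2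
    omega
  have hsink : ∀ u, T.G.Adj v u → (T.splitSide u v ⊆ X ∨ T.splitSide u v ⊆ Y) := by
    intro u hvu
    set e : T.G.edgeSet := ⟨s(v, u), hvu⟩ with he
    have heqe := heq e
    rw [show (e : Sym2 T.V) = s(v, u) from rfl, Sym2.eq_iff] at heqe
    rcases heqe with ⟨h1, h2⟩ | ⟨h1, h2⟩
    · exact absurd h1.symm (hv e)
    · have := hm e
      rwa [← h2, ← h1] at this
  have hvint : T.Internal v := by
    rintro ⟨s₀, rfl⟩
    obtain ⟨c, hc⟩ := Set.ncard_eq_one.mp (T.degree_leaf s₀)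
    have hvc : T.G.Adj (T.leaf s₀) c := by
      rw [← SimpleGraph.mem_neighborSet, hc]; rfl
    have hside := splitSide_leaf hvc
    rcases hsink c hvc with h | h
    · have hYsub : Y ⊆ {s₀} := by
        intro y hy
        rcases splitSide_total hvc y with h' | h'
        · rwa [hside] at h'
        · exact absurd (h h') (fun hx => hdis y hx hy)
      have := Set.ncard_le_ncard hYsub (Set.toFinite _)
      rw [Set.ncard_singleton] at this
      omega
    · have hXsub : X ⊆ {s₀} := by
        intro x hx
        rcases splitSide_total hvc x with h' | h'
        · rwa [hside] at h'
        · exact absurd (h h') (fun hy => hdis x hx hy)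
      have := Set.ncard_le_ncard hXsub (Set.toFinite _)
      rw [Set.ncard_singleton] at this
      omega
  set NX := {u : T.V | T.G.Adj v u ∧ T.splitSide u v ⊆ X} with hNXdef
  set NY := {u : T.V | T.G.Adj v u ∧ T.splitSide u v ⊆ Y} with hNYdef
  have hNdisj : ∀ u, u ∈ NX → u ∈ NY → False := by
    intro u h1 h2
    obtain ⟨s, hs⟩ := splitSide_nonempty h1.1.symm
    exact hdis s (h1.2 hs) (h2.2 hs)
  have hbranch : ∀ s : S, ∃ u, T.G.Adj v u ∧ s ∈ T.splitSide u v := by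
    intro s
    have hlv : T.leaf s ≠ v := fun h => hvint ⟨s, h⟩
    obtain ⟨u, h1, h2⟩ := branch hPre hlv
    exact ⟨u, h1, h2⟩
  have hbranchX : ∀ s ∈ X, ∃ u ∈ NX, s ∈ T.splitSide u v := by
    intro s hs
    obtain ⟨u, h1, h2⟩ := hbranch s
    rcases hsink u h1 with h | h
    · exact ⟨u, ⟨h1, h⟩, h2⟩
    · exact absurd (h h2) (fun hy => hdis s hs hy)
  have hbranchY : ∀ s ∈ Y, ∃ u ∈ NY, s ∈ T.splitSide u v := by
    intro s hs
    obtain ⟨u, h1, h2⟩ := hbranch s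
    rcases hsink u h1 with h | h
    · exact absurd (h h2) (fun hx => hdis s hx hs)
    · exact ⟨u, ⟨h1, h⟩, h2⟩
  have htwo : ∀ (Z : Set S) (NZ : Set T.V), (∀ u ∈ NZ, T.G.Adj v u ∧ T.splitSide u v ⊆ Z) →
      (∀ s ∈ Z, ∃ u ∈ NZ, s ∈ T.splitSide u v) → Z.Nonempty →
      (∀ s ∈ T.splitSide v (Classical.arbitrary T.V), True) →
      True := fun _ _ _ _ _ _ => trivial
  have hNX2 : ∃ u₁ ∈ NX, ∃ u₂ ∈ NX, u₁ ≠ u₂ := by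
    by_contra h
    push_neg at h
    obtain ⟨c, hc, hcx⟩ := hbranchX x₀ hx₀
    apply hP
    have hXeq : T.splitSide c v = X := by
      apply Set.Subset.antisymm hc.2
      intro x hx
      obtain ⟨u, hu, hux⟩ := hbranchX x hx
      rwa [h u hu c hc] at hux
    refine ⟨c, v, hc.1.symm, hXeq, ?_⟩
    apply Set.Subset.antisymm
    · intro s hs
      rcases htot s with hsX | hsY
      · exact absurd (hXeq ▸ hsX) (fun hh => splitSide_disj hc.1.symm hh hs)
      · exact hsY
    · intro y hy
      rcases splitSide_total hc.1.symm y with h' | h'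
      · exact absurd (hXeq ▸ h' : y ∈ X) (fun hx => hdis y hx hy)
      · exact h'
  have hNY2 : ∃ u₁ ∈ NY, ∃ u₂ ∈ NY, u₁ ≠ u₂ := by
    by_contra h
    push_neg at h
    obtain ⟨c, hc, hcy⟩ := hbranchY y₀ hy₀
    apply hP
    have hYeq : T.splitSide c v = Y := by
      apply Set.Subset.antisymm hc.2
      intro y hy
      obtain ⟨u, hu, huy⟩ := hbranchY y hy
      rwa [h u hu c hc] at huy
    refine ⟨v, c, hc.1, ?_, hYeq⟩
    apply Set.Subset.antisymm
    · intro s hs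
      rcases htot s with hsX | hsY
      · exact hsX
      · exact absurd (show s ∈ T.splitSide c v by rw [hYeq]; exact hsY)
          (fun hh => splitSide_disj hc.1 hs hh)
    · intro x hx
      rcases splitSide_total hc.1 x with h' | h'
      · exact h'
      · exact absurd (show x ∈ Y by rw [← hYeq]; exact h') (fun hy => hdis x hx hy)
  -- the two neighbor classes each have at least two elements
  have hNXcard : 2 ≤ NX.ncard := by
    obtain ⟨u₁, h1, u₂, h2, h12⟩ := hNX2
    have := (Set.one_lt_ncard (Set.toFinite _)).mpr ⟨u₁, h1, u₂, h2, h12⟩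
    omega
  have hNYcard : 2 ≤ NY.ncard := by
    obtain ⟨u₁, h1, u₂, h2, h12⟩ := hNY2
    have := (Set.one_lt_ncard (Set.toFinite _)).mpr ⟨u₁, h1, u₂, h2, h12⟩
    omega
  have hNadj : ∀ u ∈ NY, T.G.Adj v u := fun u hu => hu.1
  have hvNY : v ∉ NY := fun h => T.G.irrefl h.1
  set G' := ExtGraph T.G v NY with hG'def
  have hA' : G'.IsAcyclic := extGraph_isAcyclic hA hNadj
  haveI : Nonempty (Option T.V) := ⟨none⟩
  have hC' : G'.Connected := ⟨extGraph_preconnected hPre⟩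
  have hdiffNX : T.G.neighborSet v \ NY = NX := by
    ext u
    constructor
    · rintro ⟨h1, h2⟩
      rcases hsink u h1 with h | h
      · exact ⟨h1, h⟩
      · exact absurd (⟨h1, h⟩ : u ∈ NY) h2
    · intro h
      exact ⟨h.1, fun hy => hNdisj u h hy⟩
  have hdeg_none : (G'.neighborSet none).ncard = NY.ncard + 1 := by
    rw [extGraph_nbr_none, Set.ncard_image_of_injective _ (Option.some_injective _),
      Set.ncard_insert_of_notMem hvNY (Set.toFinite _)]
  have hdeg_v : (G'.neighborSet (some v)).ncard = NX.ncard + 1 := by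
    rw [extGraph_nbr_some_v, ncard_image_union_none, hdiffNX]
  have hdeg_some : ∀ x : T.V, x ≠ v →
      (G'.neighborSet (some x)).ncard = (T.G.neighborSet x).ncard := by
    intro x hxv
    by_cases h : x ∈ NY
    · rw [extGraph_nbr_some_mem h hxv, ncard_image_union_none,
        Set.ncard_diff_singleton_add_one (show v ∈ T.G.neighborSet x from h.1.symm)
          (Set.toFinite _)]
    · rw [extGraph_nbr_some_other h hxv,
        Set.ncard_image_of_injective _ (Option.some_injective _)]
  have hleafv : ∀ s : S, T.leaf s ≠ v := fun s h => hvint ⟨s, h⟩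
  have hdegleaf' : ∀ s : S, (G'.neighborSet (some (T.leaf s))).ncard = 1 := by
    intro s
    rw [hdeg_some _ (hleafv s)]
    exact T.degree_leaf s
  have honto' : ∀ p : Option T.V, (G'.neighborSet p).ncard = 1 →
      ∃ s, (some (T.leaf s) : Option T.V) = p := by
    rintro (_ | x) hdeg
    · exfalso
      rw [hdeg_none] at hdeg
      omega
    · by_cases hxv : x = v
      · exfalso
        subst hxv
        rw [hdeg_v] at hdeg
        omega
      · rw [hdeg_some x hxv] at hdeg
        obtain ⟨s, hs⟩ := T.leaf_of_degree_one x hdeg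
        exact ⟨s, by rw [hs]⟩
  have h3' : ∀ p : Option T.V, (¬∃ s, (some (T.leaf s) : Option T.V) = p) →
      3 ≤ (G'.neighborSet p).ncard := by
    rintro (_ | x) hint
    · rw [hdeg_none]
      omega
    · by_cases hxv : x = v
      · subst hxv
        rw [hdeg_v]
        omega
      · rw [hdeg_some x hxv]
        apply T.three_le_degree_internal
        rintro ⟨s, hs⟩
        exact hint ⟨s, by rw [hs]⟩
  let T' : StableTree S :=
    { V := Option T.V
      finiteV := inferInstance
      G := G'
      isTree := ⟨hC', hA'⟩
      leaf := fun s => some (T.leaf s)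
      leaf_injective := fun a b h => T.leaf_injective (Option.some_injective _ h)
      degree_leaf := hdegleaf'
      leaf_of_degree_one := honto'
      three_le_degree_internal := h3' }
  have hint_some : ∀ x : T.V, T.Internal x → T'.Internal (some x) := by
    intro x hx hcon
    obtain ⟨s, hs⟩ := hcon
    exact hx ⟨s, Option.some_injective _ hs⟩
  have hint_none : T'.Internal none := by
    intro hcon
    obtain ⟨s, hs⟩ := hcon
    exact Option.some_ne_none _ hs
  have hint_back : ∀ x : T.V, T'.Internal (some x) → T.Internal x := by
    intro x hx hcon
    obtain ⟨s, hs⟩ := hcon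
    exact hx ⟨s, congrArg some hs⟩
  have hAdjVN : T'.G.Adj (some v) none := Or.inl rfl
  -- the new edge realizes the split (X, Y)
  have hXsub : X ⊆ T'.splitSide (some v) none := by
    intro s hs
    obtain ⟨u, hu, hsu⟩ := hbranchX s hs
    show (T'.G.deleteEdges {s((some v : Option T.V), none)}).Reachable (some (T.leaf s)) (some v)
    refine SimpleGraph.Reachable.trans (extGraph_lift_avoid (N := NY) hA hu.1 hsu)
      (SimpleGraph.Adj.reachable ?_)
    rw [SimpleGraph.deleteEdges_adj]
    constructor
    · exact extGraph_adj_some_some.mpr ⟨hu.1.symm, fun hh => T.G.irrefl (hh.1 ▸ hu.1),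
        fun hh => hNdisj u hu hh.2⟩
    · intro hmem
      rw [Set.mem_singleton_iff, Sym2.eq_iff] at hmem
      rcases hmem with ⟨h1, h2⟩ | ⟨h1, h2⟩
      · exact Option.some_ne_none _ h2
      · exact Option.some_ne_none _ h1
  have hYsub : Y ⊆ T'.splitSide none (some v) := by
    intro s hs
    obtain ⟨u, hu, hsu⟩ := hbranchY s hs
    show (T'.G.deleteEdges {s((none : Option T.V), some v)}).Reachable (some (T.leaf s)) none
    rw [Sym2.eq_swap]
    refine SimpleGraph.Reachable.trans (extGraph_lift_avoid (N := NY) hA hu.1 hsu)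
      (SimpleGraph.Adj.reachable ?_)
    rw [SimpleGraph.deleteEdges_adj]
    constructor
    · exact Or.inr hu
    · intro hmem
      rw [Set.mem_singleton_iff, Sym2.eq_iff] at hmem
      rcases hmem with ⟨h1, h2⟩ | ⟨h1, h2⟩
      · exact T.G.irrefl ((Option.some_injective _ h1) ▸ hu.1)
      · exact Option.some_ne_none _ h1
  have hnew := part_eq hXsub hYsub htot
    (fun s h1 h2 => splitSide_disj (T := T') hAdjVN h1 h2)
  -- old splits are preserved
  have hproj_ss : ∀ a b : T.V, T.G.Adj a b → ¬(a = v ∧ b ∈ NY) → ¬(b = v ∧ a ∈ NY) →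
      T'.splitSide (some a) (some b) ⊆ T.splitSide a b := by
    intro a b hab hc1 hc2 s hs
    have := extGraph_proj hNadj {s((some a : Option T.V), some b)} {s(a, b)}
      (fun x y _ hF hmem => by
        rw [Set.mem_singleton_iff, Sym2.eq_iff] at hmem
        rcases hmem with ⟨rfl, rfl⟩ | ⟨rfl, rfl⟩
        · exact hF rfl
        · exact hF Sym2.eq_swap)
      (fun u huN _ hmem => by
        rw [Set.mem_singleton_iff, Sym2.eq_iff] at hmem
        rcases hmem with ⟨h1, h2⟩ | ⟨h1, h2⟩
        · exact hc2 ⟨h2.symm, h1 ▸ huN⟩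
        · exact hc1 ⟨h2.symm, h1 ▸ huN⟩) hs
    exact this
  have hss_eq : ∀ a b : T.V, T.G.Adj a b → ¬(a = v ∧ b ∈ NY) → ¬(b = v ∧ a ∈ NY) →
      T.splitSide a b = T'.splitSide (some a) (some b) ∧
      T.splitSide b a = T'.splitSide (some b) (some a) := by
    intro a b hab hc1 hc2
    have hadj' : T'.G.Adj (some a) (some b) := ⟨hab, hc1, hc2⟩
    exact part_eq (hproj_ss a b hab hc1 hc2)
      (hproj_ss b a hab.symm (fun hh => hc2 ⟨hh.1, hh.2⟩) (fun hh => hc1 ⟨hh.1, hh.2⟩))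
      (fun s => splitSide_total (T := T') hadj' s)
      (fun s h1 h2 => splitSide_disj hab h1 h2)
  have hproj_att1 : ∀ u, u ∈ NY → T'.splitSide (some u) none ⊆ T.splitSide u v := by
    intro u huN s hs
    have huv : u ≠ v := fun h => T.G.irrefl (h ▸ (hNadj u huN))
    have := extGraph_proj hNadj {s((some u : Option T.V), none)} {s(u, v)}
      (fun x y hxy hF hmem => by
        rw [Set.mem_singleton_iff, Sym2.eq_iff] at hmem
        rcases hmem with ⟨h1, h2⟩ | ⟨h1, h2⟩
        · exact hxy.2.2 ⟨h2, h1 ▸ huN⟩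
        · exact hxy.2.1 ⟨h1, h2 ▸ huN⟩)
      (fun u' hu'N hF hmem => by
        rw [Set.mem_singleton_iff, Sym2.eq_iff] at hmem
        rcases hmem with ⟨h1, h2⟩ | ⟨h1, h2⟩
        · exact hF (by rw [h1]; exact rfl)
        · exact T.G.irrefl (h1 ▸ hNadj u' hu'N)) hs
    exact this
  have hproj_att2 : ∀ u, u ∈ NY → T'.splitSide none (some u) ⊆ T.splitSide v u := by
    intro u huN s hs
    have huv : u ≠ v := fun h => T.G.irrefl (h ▸ (hNadj u huN))
    have hs' : (G'.deleteEdges {s((some u : Option T.V), none)}).Reachable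
        (some (T.leaf s)) none := by
      have h0 : (G'.deleteEdges {s((none : Option T.V), some u)}).Reachable
          (some (T.leaf s)) none := hs
      rwa [show s((none : Option T.V), some u) = s((some u : Option T.V), none)
        from Sym2.eq_swap] at h0
    have := extGraph_proj hNadj {s((some u : Option T.V), none)} {s(v, u)}
      (fun x y hxy hF hmem => by
        rw [Set.mem_singleton_iff, Sym2.eq_iff] at hmem
        rcases hmem with ⟨h1, h2⟩ | ⟨h1, h2⟩
        · exact hxy.2.1 ⟨h1, h2 ▸ huN⟩
        · exact hxy.2.2 ⟨h2, h1 ▸ huN⟩)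
      (fun u' hu'N hF hmem => by
        rw [Set.mem_singleton_iff, Sym2.eq_iff] at hmem
        rcases hmem with ⟨h1, h2⟩ | ⟨h1, h2⟩
        · exact T.G.irrefl (h1 ▸ hNadj u' hu'N)
        · exact hF (by rw [h1]; exact rfl)) hs'
    exact this
  have hatt_eq : ∀ u, u ∈ NY →
      T.splitSide u v = T'.splitSide (some u) none ∧
      T.splitSide v u = T'.splitSide none (some u) := by
    intro u huN
    have hadj' : T'.G.Adj (some u) none := Or.inr huN
    exact part_eq (hproj_att1 u huN) (hproj_att2 u huN)
      (fun s => splitSide_total (T := T') hadj' s)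
      (fun s h1 h2 => splitSide_disj (hNadj u huN).symm h1 h2)
  refine ⟨T', ⟨some v, none, hAdjVN, hint_some v hvint, hint_none, ?_⟩, ?_, ?_⟩
  · rw [hnew.1, hnew.2]
  · -- old internal splits are contained
    rintro ⟨A, B⟩ ⟨a, b, hab, hIa, hIb, heqp⟩
    by_cases hc1 : a = v ∧ b ∈ NY
    · obtain ⟨ha', hbNY⟩ := hc1
      subst ha'
      refine ⟨none, some b, Or.inr hbNY, hint_none, hint_some b hIb, ?_⟩
      rw [heqp, Prod.mk.injEq]
      exact ⟨(hatt_eq b hbNY).2, (hatt_eq b hbNY).1⟩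
    · by_cases hc2 : b = v ∧ a ∈ NY
      · obtain ⟨hb', haNY⟩ := hc2
        subst hb'
        refine ⟨some a, none, Or.inr haNY, hint_some a hIa, hint_none, ?_⟩
        rw [heqp, Prod.mk.injEq]
        exact ⟨(hatt_eq a haNY).1, (hatt_eq a haNY).2⟩
      · refine ⟨some a, some b, ⟨hab, hc1, hc2⟩, hint_some a hIa, hint_some b hIb, ?_⟩
        rw [heqp, Prod.mk.injEq]
        exact ⟨(hss_eq a b hab hc1 hc2).1, (hss_eq a b hab hc1 hc2).2⟩
  · -- edge count
    show {e : Sym2 (Option T.V) | e ∈ T'.G.edgeSet ∧ ∀ p ∈ e, T'.Internal p}.ncard ≤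
      {e : Sym2 T.V | e ∈ T.G.edgeSet ∧ ∀ x ∈ e, T.Internal x}.ncard + 1
    set IE' := {e : Sym2 (Option T.V) | e ∈ T'.G.edgeSet ∧ ∀ p ∈ e, T'.Internal p} with hIE'
    set IE := {e : Sym2 T.V | e ∈ T.G.edgeSet ∧ ∀ x ∈ e, T.Internal x} with hIE
    set e₀ : Sym2 (Option T.V) := s((some v : Option T.V), none) with he₀
    set φ : Sym2 (Option T.V) → Sym2 T.V := Sym2.map (fun p => p.getD v) with hφ
    have hshape : ∀ e : Sym2 (Option T.V), e ∈ IE' \ {e₀} →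
        (∃ a b : T.V, e = s(some a, some b) ∧ T'.G.Adj (some a) (some b)) ∨
        (∃ u, u ∈ NY ∧ u ≠ v ∧ e = s((some u : Option T.V), none)) := by
      intro e he
      induction e using Sym2.ind with
      | _ p q =>
        have hadj' : T'.G.Adj p q := he.1.1
        match p, q with
        | some a, some b => exact Or.inl ⟨a, b, rfl, hadj'⟩
        | some a, none =>
          rcases (hadj' : a = v ∨ a ∈ NY) with rfl | haN
          · exact absurd rfl he.2
          · exact Or.inr ⟨a, haN, fun h => hvNY (h ▸ haN), rfl⟩
        | none, some b =>
          rcases (hadj' : b = v ∨ b ∈ NY) with hbv | hbN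
          · exact absurd (show s((none : Option T.V), some b) = e₀ by
              rw [hbv]; exact Sym2.eq_swap) he.2
          · exact Or.inr ⟨b, hbN, fun h => hvNY (h ▸ hbN), Sym2.eq_swap⟩
        | none, none => exact absurd hadj' extGraph_adj_none_none
    have himg : ∀ e ∈ IE' \ {e₀}, φ e ∈ IE := by
      intro e he
      rcases hshape e he with ⟨a, b, rfl, hadj'⟩ | ⟨u, huN, huv, rfl⟩
      · have hintp := he.1.2
        refine ⟨(hadj'.1 : T.G.Adj a b), ?_⟩
        intro x hx
        rw [show φ s(some a, some b) = s(a, b) from Sym2.map_pair_eq _ _ _, Sym2.mem_iff] at hx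
        rcases hx with rfl | rfl
        · exact hint_back x (hintp (some x) (Sym2.mem_iff.mpr (Or.inl rfl)))
        · exact hint_back x (hintp (some x) (Sym2.mem_iff.mpr (Or.inr rfl)))
      · have hintp := he.1.2
        refine ⟨((hNadj u huN).symm : T.G.Adj u v), ?_⟩
        intro x hx
        rw [show φ s((some u : Option T.V), none) = s(u, v) from Sym2.map_pair_eq _ _ _,
          Sym2.mem_iff] at hx
        rcases hx with rfl | rfl
        · exact hint_back x (hintp (some x) (Sym2.mem_iff.mpr (Or.inl rfl)))
        · exact hvint
    have hinjOn : Set.InjOn φ (IE' \ {e₀}) := by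
      intro e1 h1 e2 h2 hφeq
      rcases hshape e1 h1 with ⟨a, b, rfl, hadj1⟩ | ⟨u1, hu1N, hu1v, rfl⟩ <;>
        rcases hshape e2 h2 with ⟨c, d, rfl, hadj2⟩ | ⟨u2, hu2N, hu2v, rfl⟩
      · rw [show φ s(some a, some b) = s(a, b) from Sym2.map_pair_eq _ _ _,
          show φ s(some c, some d) = s(c, d) from Sym2.map_pair_eq _ _ _, Sym2.eq_iff] at hφeq
        rcases hφeq with ⟨rfl, rfl⟩ | ⟨rfl, rfl⟩
        · rfl
        · exact Sym2.eq_swap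
      · exfalso
        rw [show φ s(some a, some b) = s(a, b) from Sym2.map_pair_eq _ _ _,
          show φ s((some u2 : Option T.V), none) = s(u2, v) from Sym2.map_pair_eq _ _ _,
          Sym2.eq_iff] at hφeq
        rcases hφeq with ⟨h1, h2⟩ | ⟨h1, h2⟩
        · exact hadj1.2.2 ⟨h2, by rw [h1]; exact hu2N⟩
        · exact hadj1.2.1 ⟨h1, by rw [h2]; exact hu2N⟩
      · exfalso
        rw [show φ s(some c, some d) = s(c, d) from Sym2.map_pair_eq _ _ _,
          show φ s((some u1 : Option T.V), none) = s(u1, v) from Sym2.map_pair_eq _ _ _,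
          Sym2.eq_iff] at hφeq
        rcases hφeq with ⟨h1, h2⟩ | ⟨h1, h2⟩
        · exact hadj2.2.2 ⟨h2.symm, by rw [← h1]; exact hu1N⟩
        · exact hadj2.2.1 ⟨h2.symm, by rw [← h1]; exact hu1N⟩
      · rw [show φ s((some u1 : Option T.V), none) = s(u1, v) from Sym2.map_pair_eq _ _ _,
          show φ s((some u2 : Option T.V), none) = s(u2, v) from Sym2.map_pair_eq _ _ _,
          Sym2.eq_iff] at hφeq
        rcases hφeq with ⟨h1, h2⟩ | ⟨h1, h2⟩
        · rw [h1]
        · exact absurd h1 hu1v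
    have hsub : IE' ⊆ insert e₀ (IE' \ {e₀}) := by
      intro e he
      by_cases h : e = e₀
      · rw [h]
        exact Set.mem_insert _ _
      · exact Set.mem_insert_of_mem _ ⟨he, h⟩
    calc IE'.ncard ≤ (insert e₀ (IE' \ {e₀})).ncard :=
          Set.ncard_le_ncard hsub (Set.toFinite _)
      _ ≤ (IE' \ {e₀}).ncard + 1 := Set.ncard_insert_le _ _
      _ = (φ '' (IE' \ {e₀})).ncard + 1 := by rw [Set.ncard_image_of_injOn hinjOn]
      _ ≤ IE.ncard + 1 := by
          have hss : φ '' (IE' \ {e₀}) ⊆ IE := by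
            rintro y ⟨e, he, rfl⟩
            exact himg e he
          have := Set.ncard_le_ncard hss (Set.toFinite _)
          omega
end

section
/- Let T₁ and T₂ be stable trees on a finite set S. Then there exists a stable tree T on S whose collection of internal-edge splits contains every internal-edge split of T₁ and every internal-edge split of T₂ if and only if every internal-edge split of T₁ is compatible with every internal-edge split of T₂. -/
open scoped Classical
set_option linter.unusedSectionVars false
set_option maxHeartbeats 1000000

section PartA

open SimpleGraph

variable {V : Type} (G : SimpleGraph V)

/-- In a tree, every edge is a bridge. -/
lemma tree_bridge (hT : G.IsTree) {a b : V} (h : G.Adj a b) :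
    ¬ (G.deleteEdges {s(a, b)}).Reachable a b := by
  have := (isAcyclic_iff_forall_adj_isBridge.mp hT.IsAcyclic) h
  rw [isBridge_iff] at this
  exact this

lemma reach_or_step {a b : V} : ∀ {v u : V}, G.Walk v u →
    ((G.deleteEdges {s(a, b)}).Reachable u a ∨ (G.deleteEdges {s(a, b)}).Reachable u b) →
    ((G.deleteEdges {s(a, b)}).Reachable v a ∨ (G.deleteEdges {s(a, b)}).Reachable v b) := by
  intro v u w
  induction w with
  | nil => exact id
  | @cons v' x u' hadj p ih =>
    intro hend
    by_cases he : s(v', x) = s(a, b)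
    · rw [Sym2.eq_iff] at he
      rcases he with ⟨rfl, rfl⟩ | ⟨rfl, rfl⟩
      · exact Or.inl (Reachable.refl _)
      · exact Or.inr (Reachable.refl _)
    · have hadj' : (G.deleteEdges {s(a, b)}).Adj v' x := by
        simp only [deleteEdges_adj, Set.mem_singleton_iff]
        exact ⟨hadj, he⟩
      rcases ih hend with h1 | h1
      · exact Or.inl (hadj'.reachable.trans h1)
      · exact Or.inr (hadj'.reachable.trans h1)

/-- Any vertex reaches one of the two endpoints after deleting an edge. -/
lemma reach_or (hT : G.IsTree) (a b : V) (v : V) :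
    (G.deleteEdges {s(a, b)}).Reachable v a ∨ (G.deleteEdges {s(a, b)}).Reachable v b := by
  obtain ⟨w⟩ := hT.isConnected.preconnected v a
  exact reach_or_step G w (Or.inl (Reachable.refl _))

/-- Transfer a walk avoiding a vertex `x` into the graph with edge `s(x,y)` deleted. -/
lemma reach_of_walk_avoid {e : Sym2 V} {u v x y : V}
    (w : (G.deleteEdges {e}).Walk u v) (hx : x ∉ w.support) :
    (G.deleteEdges {s(x, y)}).Reachable u v := by
  have hsub : ∀ d ∈ w.edges, d ∈ (G.deleteEdges {s(x, y)}).edgeSet := by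
    intro d hd
    have hd1 : d ∈ (G.deleteEdges {e}).edgeSet := w.edges_subset_edgeSet hd
    have hd2 : d ∈ G.edgeSet := by
      rw [edgeSet_deleteEdges] at hd1; exact hd1.1
    rw [edgeSet_deleteEdges]
    refine ⟨hd2, ?_⟩
    intro hde
    rw [Set.mem_singleton_iff] at hde
    subst hde
    exact hx (w.fst_mem_support_of_mem_edges hd)
  exact ⟨w.transfer _ hsub⟩

lemma reachable_of_mem_support {H : SimpleGraph V} {u v x : V} (w : H.Walk u v)
    (hx : x ∈ w.support) : H.Reachable u x ∧ H.Reachable x v :=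
  ⟨⟨w.takeUntil x hx⟩, ⟨w.dropUntil x hx⟩⟩

end PartA

namespace StableTree

variable {S : Type} [Fintype S] (T : StableTree S)

lemma splitSide_compl {a b : T.V} (h : T.G.Adj a b) :
    T.splitSide b a = (T.splitSide a b)ᶜ := by
  ext s
  have hswap : s(b, a) = s(a, b) := Sym2.eq_swap
  simp only [StableTree.splitSide, Set.mem_setOf_eq, Set.mem_compl_iff, hswap]
  constructor
  · intro hb ha
    exact tree_bridge T.G T.isTree h ((ha.symm).trans hb)
  · intro ha
    rcases reach_or T.G T.isTree a b (T.leaf s) with h1 | h1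
    · exact absurd h1 ha
    · exact h1


open SimpleGraph

/-- From any internal vertex, each branch contains a leaf. -/
lemma exists_leaf_branch_aux :
    ∀ (n : ℕ) (a c : T.V), T.G.Adj a c →
      {v | (T.G.deleteEdges {s(a, c)}).Reachable c v}.ncard ≤ n →
      ∃ s, (T.G.deleteEdges {s(a, c)}).Reachable (T.leaf s) c := by
  have : Finite T.V := T.finiteV
  intro n
  induction n with
  | zero =>
    intro a c _ hle
    exfalso
    have hc : c ∈ {v | (T.G.deleteEdges {s(a, c)}).Reachable c v} := Reachable.refl _
    have : 0 < {v | (T.G.deleteEdges {s(a, c)}).Reachable c v}.ncard :=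
      Set.ncard_pos (Set.toFinite _) |>.mpr ⟨c, hc⟩
    omega
  | succ n ih =>
    intro a c hac hle
    by_cases hc : ∃ s, T.leaf s = c
    · obtain ⟨s, rfl⟩ := hc
      exact ⟨s, Reachable.refl _⟩
    · have hdeg := T.three_le_degree_internal c hc
      have hd : ∃ d, d ∈ T.G.neighborSet c ∧ d ≠ a := by
        by_contra hcon
        push_neg at hcon
        have hsub : T.G.neighborSet c ⊆ {a} := fun x hx => hcon x hx
        have := Set.ncard_le_ncard hsub (Set.finite_singleton a)
        rw [Set.ncard_singleton] at this
        omega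
      obtain ⟨d, hd, hda⟩ := hd
      have hcd : T.G.Adj c d := hd
      have hne : s(a, c) ≠ s(c, d) := by
        simp only [ne_eq, Sym2.eq_iff]
        push_neg
        constructor
        · intro h1; exact absurd h1 hac.ne
        · intro h1; exact absurd h1.symm hda
      -- the component of d after deleting (c,d) sits strictly inside that of c
      have hsub : {v | (T.G.deleteEdges {s(c, d)}).Reachable d v} ⊆
          {v | (T.G.deleteEdges {s(a, c)}).Reachable c v} \ {c} := by
        rintro v ⟨w⟩
        have hanotin : a ∉ w.support := by
          intro hmem
          have hda' := (reachable_of_mem_support w hmem).1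
          have hadjac : (T.G.deleteEdges {s(c, d)}).Adj a c := by
            simp only [deleteEdges_adj, Set.mem_singleton_iff]
            exact ⟨hac, fun h => hne h⟩
          exact tree_bridge T.G T.isTree hcd (hadjac.reachable.symm.trans hda'.symm)
        have hreach : (T.G.deleteEdges {s(a, c)}).Reachable d v :=
          reach_of_walk_avoid T.G w hanotin
        have hcd' : (T.G.deleteEdges {s(a, c)}).Adj c d := by
          simp only [deleteEdges_adj, Set.mem_singleton_iff]
          exact ⟨hcd, fun h => hne h.symm⟩
        refine ⟨hcd'.reachable.trans hreach, ?_⟩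
        intro hvc
        rw [Set.mem_singleton_iff] at hvc
        have hw : (T.G.deleteEdges {s(c, d)}).Reachable d v := ⟨w⟩
        rw [hvc] at hw
        exact tree_bridge T.G T.isTree hcd hw.symm
      have hlt : {v | (T.G.deleteEdges {s(c, d)}).Reachable d v}.ncard ≤ n := by
        have h1 : {v | (T.G.deleteEdges {s(a, c)}).Reachable c v} \ {c} ⊂
            {v | (T.G.deleteEdges {s(a, c)}).Reachable c v} := by
          refine Set.sdiff_singleton_ssubset.mpr (Reachable.refl _)
        have h2 := Set.ncard_le_ncard hsub (Set.toFinite _)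
        have h3 := Set.ncard_lt_ncard h1 (Set.toFinite _)
        omega
      obtain ⟨s, hs⟩ := ih c d hcd hlt
      -- transfer back: leaf s is in component of d, hence of c
      refine ⟨s, ?_⟩
      have : T.leaf s ∈ {v | (T.G.deleteEdges {s(a, c)}).Reachable c v} \ {c} :=
        hsub hs.symm
      exact this.1.symm

lemma exists_leaf_branch {a c : T.V} (hac : T.G.Adj a c) :
    ∃ s, (T.G.deleteEdges {s(a, c)}).Reachable (T.leaf s) c :=
  exists_leaf_branch_aux T _ a c hac le_rfl


/-- Leaves reachable through a neighbor `c ≠ b` of `a` lie in `splitSide a b`. -/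
lemma mem_splitSide_of_branch {a b c : T.V} (hab : T.G.Adj a b) (hac : T.G.Adj a c)
    (hcb : c ≠ b) {s : S} (hs : (T.G.deleteEdges {s(a, c)}).Reachable (T.leaf s) c) :
    s ∈ T.splitSide a b := by
  obtain ⟨w⟩ := hs
  have hanotin : a ∉ w.support := by
    intro hmem
    obtain ⟨_, h2⟩ := reachable_of_mem_support w hmem
    exact tree_bridge T.G T.isTree hac h2
  have h1 : (T.G.deleteEdges {s(a, b)}).Reachable (T.leaf s) c :=
    reach_of_walk_avoid T.G w hanotin
  have h2 : (T.G.deleteEdges {s(a, b)}).Adj c a := by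
    simp only [deleteEdges_adj, Set.mem_singleton_iff]
    refine ⟨hac.symm, ?_⟩
    simp only [Sym2.eq_iff]
    push_neg
    exact ⟨fun _ => hab.ne, fun h => absurd h hcb⟩
  exact h1.trans h2.reachable

lemma two_le_splitSide {a b : T.V} (hab : T.G.Adj a b) (ha : T.Internal a) :
    2 ≤ (T.splitSide a b).ncard := by
  have : Finite T.V := T.finiteV
  have hdeg := T.three_le_degree_internal a ha
  -- two neighbors of `a` distinct from `b`
  have h2 : ∃ c₁ ∈ T.G.neighborSet a \ {b}, ∃ c₂ ∈ T.G.neighborSet a \ {b}, c₁ ≠ c₂ := by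
    have hsub : T.G.neighborSet a ⊆ (T.G.neighborSet a \ {b}) ∪ {b} := by
      intro x hx; by_cases hxb : x = b
      · exact Or.inr hxb
      · exact Or.inl ⟨hx, hxb⟩
    have hcard : 3 ≤ ((T.G.neighborSet a \ {b}) ∪ {b}).ncard :=
      le_trans hdeg (Set.ncard_le_ncard hsub (Set.toFinite _))
    have hcard2 := Set.ncard_union_le (T.G.neighborSet a \ {b}) {b}
    rw [Set.ncard_singleton] at hcard2
    have : 2 ≤ (T.G.neighborSet a \ {b}).ncard := by omega
    obtain ⟨c₁, c₂, h₁, h₂, hne⟩ := (Set.one_lt_ncard_iff (Set.toFinite _)).mp this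
    exact ⟨c₁, h₁, c₂, h₂, hne⟩
  obtain ⟨c₁, ⟨hc₁, hc₁b⟩, c₂, ⟨hc₂, hc₂b⟩, hcc⟩ := h2
  rw [Set.mem_singleton_iff] at hc₁b hc₂b
  have hac₁ : T.G.Adj a c₁ := hc₁
  have hac₂ : T.G.Adj a c₂ := hc₂
  obtain ⟨s₁, hs₁⟩ := exists_leaf_branch T hac₁
  obtain ⟨s₂, hs₂⟩ := exists_leaf_branch T hac₂
  have hm₁ : s₁ ∈ T.splitSide a b := T.mem_splitSide_of_branch hab hac₁ hc₁b hs₁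
  have hm₂ : s₂ ∈ T.splitSide a b := T.mem_splitSide_of_branch hab hac₂ hc₂b hs₂
  have hne : s₁ ≠ s₂ := by
    rintro rfl
    -- leaf s₁ reaches c₁ avoiding (a,c₁) and reaches c₂ avoiding (a,c₂): contradiction
    obtain ⟨w₂⟩ := hs₂
    have hanotin : a ∉ w₂.support := by
      intro hmem
      obtain ⟨_, h2⟩ := reachable_of_mem_support w₂ hmem
      exact tree_bridge T.G T.isTree hac₂ h2
    have h1 : (T.G.deleteEdges {s(a, c₁)}).Reachable (T.leaf s₁) c₂ :=
      reach_of_walk_avoid T.G w₂ hanotin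
    have h2 : (T.G.deleteEdges {s(a, c₁)}).Adj c₂ a := by
      simp only [deleteEdges_adj, Set.mem_singleton_iff, Sym2.eq_iff]
      push_neg
      exact ⟨hac₂.symm, fun h _ => absurd h hac₂.ne', fun h => absurd h (Ne.symm hcc)⟩
    have h3 : (T.G.deleteEdges {s(a, c₁)}).Reachable a c₁ :=
      (h1.trans h2.reachable).symm.trans hs₁
    exact tree_bridge T.G T.isTree hac₁ h3
  exact (Set.one_lt_ncard_iff (Set.toFinite _)).mpr ⟨s₁, s₂, hm₁, hm₂, hne⟩


/-- Key lemma: if `x, y` lie on the `b`-side of edge `(a,b)` and `a` lies on the `x`-side of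
edge `(x,y)` then `splitSide a b ⊆ splitSide x y`. -/
lemma splitSide_subset {a b x y : T.V} (hab : T.G.Adj a b) (hxy : T.G.Adj x y)
    (hx : (T.G.deleteEdges {s(a, b)}).Reachable x b)
    (hy : (T.G.deleteEdges {s(a, b)}).Reachable y b)
    (hax : (T.G.deleteEdges {s(x, y)}).Reachable a x) :
    T.splitSide a b ⊆ T.splitSide x y := by
  intro s hs
  obtain ⟨w⟩ := hs
  have hxnotin : x ∉ w.support := by
    intro hmem
    obtain ⟨_, h2⟩ := reachable_of_mem_support w hmem
    exact tree_bridge T.G T.isTree hab (h2.symm.trans hx)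
  have hynotin : y ∉ w.support := by
    intro hmem
    obtain ⟨_, h2⟩ := reachable_of_mem_support w hmem
    exact tree_bridge T.G T.isTree hab (h2.symm.trans hy)
  have h1 : (T.G.deleteEdges {s(x, y)}).Reachable (T.leaf s) a :=
    reach_of_walk_avoid T.G w hxnotin
  exact h1.trans hax

lemma inter_compl_eq_empty {A B : Set S} (h : A ⊆ B) : A ∩ Bᶜ = ∅ := by
  rw [← Set.diff_eq]
  exact Set.diff_eq_empty.mpr h

/-- Any two internal splits of the same stable tree are compatible. -/
lemma compat_self {p q : Set S × Set S} (hp : p ∈ T.internalSplits)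
    (hq : q ∈ T.internalSplits) : SplitCompatible p q := by
  obtain ⟨a, b, hab, -, -, rfl⟩ := hp
  obtain ⟨x, y, hxy, -, -, rfl⟩ := hq
  by_cases he : s(a, b) = s(x, y)
  · rw [Sym2.eq_iff] at he
    rcases he with ⟨rfl, rfl⟩ | ⟨rfl, rfl⟩
    · refine Or.inr (Or.inl ?_)
      rw [T.splitSide_compl hab]
      exact inter_compl_eq_empty (le_refl _)
    · refine Or.inl ?_
      rw [T.splitSide_compl hab]
      exact inter_compl_eq_empty (le_refl _)
  · have hxyedge : (T.G.deleteEdges {s(a, b)}).Adj x y := by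
      simp only [deleteEdges_adj, Set.mem_singleton_iff]
      exact ⟨hxy, fun hh => he hh.symm⟩
    rcases reach_or T.G T.isTree a b x with hxa | hxb
    · -- x, y on the a-side of (a,b): use splitSide b a ⊆ ...
      have hya : (T.G.deleteEdges {s(a, b)}).Reachable y a :=
        hxyedge.symm.reachable.trans hxa
      have hba : s(b, a) = s(a, b) := Sym2.eq_swap
      rcases reach_or T.G T.isTree x y b with hbx | hby
      · have hsub : T.splitSide b a ⊆ T.splitSide x y := by
          refine T.splitSide_subset hab.symm hxy ?_ ?_ hbx
          · rw [hba]; exact hxa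
          · rw [hba]; exact hya
        refine Or.inr (Or.inr (Or.inr ?_))
        rw [T.splitSide_compl hxy]
        exact inter_compl_eq_empty hsub
      · have hsub : T.splitSide b a ⊆ T.splitSide y x := by
          refine T.splitSide_subset hab.symm hxy.symm ?_ ?_ ?_
          · rw [hba]; exact hya
          · rw [hba]; exact hxa
          · rw [show s(y, x) = s(x, y) from Sym2.eq_swap]; exact hby
        refine Or.inr (Or.inr (Or.inl ?_))
        rw [T.splitSide_compl hxy.symm]
        exact inter_compl_eq_empty hsub
    · have hyb : (T.G.deleteEdges {s(a, b)}).Reachable y b :=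
        hxyedge.symm.reachable.trans hxb
      rcases reach_or T.G T.isTree x y a with hax | hay
      · have hsub : T.splitSide a b ⊆ T.splitSide x y :=
          T.splitSide_subset hab hxy hxb hyb hax
        refine Or.inr (Or.inl ?_)
        rw [T.splitSide_compl hxy]
        exact inter_compl_eq_empty hsub
      · have hsub : T.splitSide a b ⊆ T.splitSide y x := by
          refine T.splitSide_subset hab hxy.symm hyb hxb ?_
          rw [show s(y, x) = s(x, y) from Sym2.eq_swap]; exact hay
        refine Or.inl ?_
        rw [T.splitSide_compl hxy.symm]
        exact inter_compl_eq_empty hsub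

/-- internalSplits is symmetric under swapping. -/
lemma swap_mem_internalSplits {p : Set S × Set S} (hp : p ∈ T.internalSplits) :
    (p.2, p.1) ∈ T.internalSplits := by
  obtain ⟨a, b, hab, ha, hb, rfl⟩ := hp
  exact ⟨b, a, hab.symm, hb, ha, rfl⟩

lemma snd_eq_compl_fst {p : Set S × Set S} (hp : p ∈ T.internalSplits) :
    p.2 = p.1ᶜ := by
  obtain ⟨a, b, hab, -, -, rfl⟩ := hp
  exact T.splitSide_compl hab

end StableTree

section Build

open SimpleGraph

/-- Data for the Buneman-type construction: a laminar family of "split sides" avoiding a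
base point `s₀`, each side and co-side having at least two elements. -/
structure LamData (S : Type) [Fintype S] where
  F : Set (Set S)
  s₀ : S
  hs₀ : ∀ A ∈ F, s₀ ∉ A
  h2 : ∀ A ∈ F, 2 ≤ A.ncard
  h4 : ∀ A ∈ F, 2 ≤ (Aᶜ).ncard
  hlam : ∀ A ∈ F, ∀ B ∈ F, A ⊆ B ∨ B ⊆ A ∨ A ∩ B = ∅
  hne : F.Nonempty

namespace LamData

variable {S : Type} [Fintype S] (D : LamData S)

/-- Vertices of the constructed tree: members of `F`, the whole set, and singletons. -/
def P (A : Set S) : Prop := A ∈ D.F ∨ A = Set.univ ∨ ∃ s : S, A = {s}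

abbrev Vx := {A : Set S // D.P A}

noncomputable instance : Fintype (Set S) := inferInstance

noncomputable instance : Fintype D.Vx := by
  unfold Vx; infer_instance

include D in
lemma card4 : 4 ≤ Fintype.card S := by
  obtain ⟨A, hA⟩ := D.hne
  have h1 := D.h2 A hA
  have h2 := D.h4 A hA
  have h3 := Set.ncard_add_ncard_compl A
  rw [← Nat.card_eq_fintype_card]
  omega

include D in
lemma univ_ne_singleton (s : S) : (Set.univ : Set S) ≠ {s} := by
  intro h
  have := D.card4
  have h1 : (Set.univ : Set S).ncard = Fintype.card S := by
    rw [Set.ncard_univ, Nat.card_eq_fintype_card]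
  rw [h, Set.ncard_singleton] at h1
  omega

lemma nonemptyP {A : Set S} (hA : D.P A) : A.Nonempty := by
  rcases hA with h | h | ⟨s, rfl⟩
  · have := D.h2 A h
    exact Set.nonempty_of_ncard_ne_zero (by omega)
  · subst h; exact ⟨D.s₀, trivial⟩
  · exact ⟨s, rfl⟩

lemma chainP {A B : Set S} (hA : D.P A) (hB : D.P B) (hAB : (A ∩ B).Nonempty) :
    A ⊆ B ∨ B ⊆ A := by
  rcases hA with hA | hA | ⟨s, rfl⟩
  · rcases hB with hB | hB | ⟨t, rfl⟩
    · rcases D.hlam A hA B hB with h | h | h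
      · exact Or.inl h
      · exact Or.inr h
      · rw [h] at hAB; exact absurd hAB (by simp)
    · subst hB; exact Or.inl (Set.subset_univ _)
    · obtain ⟨x, hx1, hx2⟩ := hAB
      rw [Set.mem_singleton_iff] at hx2; subst hx2
      exact Or.inr (Set.singleton_subset_iff.mpr hx1)
  · subst hA; exact Or.inr (Set.subset_univ _)
  · obtain ⟨x, hx1, hx2⟩ := hAB
    rw [Set.mem_singleton_iff] at hx1; subst hx1
    exact Or.inl (Set.singleton_subset_iff.mpr hx2)

/-- The root vertex. -/
def root : D.Vx := ⟨Set.univ, Or.inr (Or.inl rfl)⟩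

lemma exists_parent (A : D.Vx) (h : A.1 ≠ Set.univ) :
    ∃ Q : D.Vx, A.1 ⊂ Q.1 ∧ ∀ C : D.Vx, A.1 ⊂ C.1 → Q.1 ⊆ C.1 := by
  classical
  set U : Finset D.Vx := Finset.univ.filter (fun C => A.1 ⊂ C.1) with hU
  have hUne : U.Nonempty := by
    refine ⟨D.root, ?_⟩
    simp only [hU, Finset.mem_filter, Finset.mem_univ, true_and]
    exact Set.ssubset_univ_iff.mpr h
  obtain ⟨m, hm, hmin⟩ := U.exists_min_image (fun C => C.1.ncard) hUne
  simp only [hU, Finset.mem_filter, Finset.mem_univ, true_and] at hm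
  refine ⟨m, hm, ?_⟩
  intro C hC
  have hCU : C ∈ U := by
    simp only [hU, Finset.mem_filter, Finset.mem_univ, true_and]; exact hC
  have hmc := hmin C hCU
  have hch : m.1 ⊆ C.1 ∨ C.1 ⊆ m.1 := by
    refine D.chainP m.2 C.2 ?_
    obtain ⟨x, hx⟩ := D.nonemptyP A.2
    exact ⟨x, hm.1 hx, hC.1 hx⟩
  rcases hch with h1 | h1
  · exact h1
  · rw [Set.eq_of_subset_of_ncard_le h1 hmc (Set.toFinite _)]

noncomputable def parent (A : D.Vx) : D.Vx :=
  if h : A.1 = Set.univ then A else (D.exists_parent A h).choose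

lemma parent_ssub {A : D.Vx} (h : A.1 ≠ Set.univ) : A.1 ⊂ (D.parent A).1 := by
  rw [parent, dif_neg h]
  exact (D.exists_parent A h).choose_spec.1

lemma parent_min {A : D.Vx} (h : A.1 ≠ Set.univ) {C : D.Vx} (hC : A.1 ⊂ C.1) :
    (D.parent A).1 ⊆ C.1 := by
  rw [parent, dif_neg h]
  exact (D.exists_parent A h).choose_spec.2 C hC

/-- The graph of the constructed tree: the Hasse diagram of the laminar family. -/
def G : SimpleGraph D.Vx where
  Adj A B := (A.1 ≠ Set.univ ∧ D.parent A = B) ∨ (B.1 ≠ Set.univ ∧ D.parent B = A)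
  symm := by
    refine ⟨?_⟩
    intro A B h
    rcases h with h | h
    · exact Or.inr h
    · exact Or.inl h
  loopless := by
    refine ⟨?_⟩
    intro A h
    rcases h with ⟨h1, h2⟩ | ⟨h1, h2⟩ <;>
    · have := D.parent_ssub h1
      rw [h2] at this
      exact (ssubset_irrefl _) this

lemma adj_parent {A : D.Vx} (h : A.1 ≠ Set.univ) : D.G.Adj A (D.parent A) :=
  Or.inl ⟨h, rfl⟩

lemma eq_univ_of_card_le (A : D.Vx) (h : Fintype.card S ≤ A.1.ncard) : A.1 = Set.univ := by
  have h1 : A.1 ⊆ Set.univ := Set.subset_univ _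
  have h2 : (Set.univ : Set S).ncard = Fintype.card S := by
    rw [Set.ncard_univ, Nat.card_eq_fintype_card]
  exact Set.eq_of_subset_of_ncard_le h1 (by omega) (Set.toFinite _)

lemma reach_root_aux : ∀ (n : ℕ) (A : D.Vx), Fintype.card S - A.1.ncard ≤ n →
    D.G.Reachable A D.root := by
  intro n
  induction n with
  | zero =>
    intro A hle
    have : A.1 = Set.univ := D.eq_univ_of_card_le A (by omega)
    rw [show A = D.root from Subtype.ext this]
  | succ n ih =>
    intro A hle
    by_cases h : A.1 = Set.univ
    · rw [show A = D.root from Subtype.ext h]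
    · have hadj := D.adj_parent h
      have hlt : A.1.ncard < (D.parent A).1.ncard :=
        Set.ncard_lt_ncard (D.parent_ssub h) (Set.toFinite _)
      have hcard : (D.parent A).1.ncard ≤ Fintype.card S := by
        have := Set.ncard_le_ncard (Set.subset_univ (D.parent A).1) (Set.toFinite _)
        rwa [Set.ncard_univ, Nat.card_eq_fintype_card] at this
      exact hadj.reachable.trans (ih (D.parent A) (by omega))

lemma reach_root (A : D.Vx) : D.G.Reachable A D.root :=
  D.reach_root_aux (Fintype.card S) A (by omega)

include D in
lemma connected : D.G.Connected := by
  rw [connected_iff]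
  refine ⟨?_, ⟨D.root⟩⟩
  intro A B
  exact (D.reach_root A).trans (D.reach_root B).symm

/-- Crossing lemma: any edge other than `{A₀, parent A₀}` does not cross the boundary of
`A₀`. -/
lemma side_invariant_adj (A₀ : D.Vx) (h₀ : A₀.1 ≠ Set.univ) {B C : D.Vx}
    (h : (D.G.deleteEdges {s(A₀, D.parent A₀)}).Adj B C) : (B.1 ⊆ A₀.1 ↔ C.1 ⊆ A₀.1) := by
  rw [deleteEdges_adj, Set.mem_singleton_iff] at h
  obtain ⟨hadj, hne⟩ := h
  -- WLOG `C = parent B`.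
  have key : ∀ B C : D.Vx, B.1 ≠ Set.univ → D.parent B = C → s(B, C) ≠ s(A₀, D.parent A₀) →
      (B.1 ⊆ A₀.1 ↔ C.1 ⊆ A₀.1) := by
    intro B C hBu hBC hne
    constructor
    · intro hBA
      have hBne : B ≠ A₀ := by
        intro h
        subst h
        rw [hBC] at hne
        exact hne rfl
      have hBss : B.1 ⊂ A₀.1 := by
        refine ssubset_of_subset_of_ne hBA (fun h => hBne (Subtype.ext h))
      have := D.parent_min hBu hBss
      rwa [hBC] at this
    · intro hCA
      have : B.1 ⊆ C.1 := by
        rw [← hBC]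
        exact (D.parent_ssub hBu).subset
      exact this.trans hCA
  rcases hadj with ⟨h1, h2⟩ | ⟨h1, h2⟩
  · exact key B C h1 h2 hne
  · refine (key C B h1 h2 ?_).symm
    intro h
    rw [Sym2.eq_swap] at h
    exact hne h

lemma side_invariant (A₀ : D.Vx) (h₀ : A₀.1 ≠ Set.univ) {B C : D.Vx}
    (h : (D.G.deleteEdges {s(A₀, D.parent A₀)}).Reachable B C) :
    (B.1 ⊆ A₀.1 ↔ C.1 ⊆ A₀.1) := by
  obtain ⟨w⟩ := h
  induction w with
  | nil => exact Iff.rfl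
  | cons hadj p ih => exact (D.side_invariant_adj A₀ h₀ hadj).trans ih

/-- Climbing within `A₀`: every vertex contained in `A₀` reaches `A₀` avoiding the edge
`{A₀, parent A₀}`. -/
lemma reach_down (A₀ : D.Vx) (h₀ : A₀.1 ≠ Set.univ) :
    ∀ (n : ℕ) (B : D.Vx), B.1 ⊆ A₀.1 → A₀.1.ncard - B.1.ncard ≤ n →
      (D.G.deleteEdges {s(A₀, D.parent A₀)}).Reachable B A₀ := by
  intro n
  induction n with
  | zero =>
    intro B hB hle
    have : B.1 = A₀.1 :=
      Set.eq_of_subset_of_ncard_le hB (by omega) (Set.toFinite _)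
    rw [Subtype.ext this]
  | succ n ih =>
    intro B hB hle
    by_cases hBA : B.1 = A₀.1
    · rw [Subtype.ext hBA]
    · have hBss : B.1 ⊂ A₀.1 := ssubset_of_subset_of_ne hB hBA
      have hBu : B.1 ≠ Set.univ := by
        intro h
        rw [h] at hBss
        exact h₀ (Set.eq_univ_of_univ_subset hBss.subset)
      have hPsub : (D.parent B).1 ⊆ A₀.1 := D.parent_min hBu hBss
      have hPA₀ : (D.parent A₀).1 ≠ B.1 := by
        intro h
        have h1 := D.parent_ssub h₀
        rw [h] at h1
        exact absurd (h1.trans hBss) (ssubset_irrefl _)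
      have hne : s(B, D.parent B) ≠ s(A₀, D.parent A₀) := by
        simp only [ne_eq, Sym2.eq_iff]
        push_neg
        constructor
        · intro h; exact absurd (Subtype.ext_iff.mp h) hBA
        · intro h
          exact absurd (Subtype.ext_iff.mp h).symm hPA₀
      have hadj : (D.G.deleteEdges {s(A₀, D.parent A₀)}).Adj B (D.parent B) := by
        rw [deleteEdges_adj, Set.mem_singleton_iff]
        exact ⟨D.adj_parent hBu, hne⟩
      have hlt : B.1.ncard < (D.parent B).1.ncard :=
        Set.ncard_lt_ncard (D.parent_ssub hBu) (Set.toFinite _)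
      exact hadj.reachable.trans (ih (D.parent B) hPsub (by omega))

/-- Climbing outside `A₀`: every vertex not contained in `A₀` reaches the root avoiding the
edge `{A₀, parent A₀}`. -/
lemma reach_root_del (A₀ : D.Vx) (h₀ : A₀.1 ≠ Set.univ) :
    ∀ (n : ℕ) (B : D.Vx), ¬ (B.1 ⊆ A₀.1) → Fintype.card S - B.1.ncard ≤ n →
      (D.G.deleteEdges {s(A₀, D.parent A₀)}).Reachable B D.root := by
  intro n
  induction n with
  | zero =>
    intro B hB hle
    rw [show B = D.root from Subtype.ext (D.eq_univ_of_card_le B (by omega))]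
  | succ n ih =>
    intro B hB hle
    by_cases h : B.1 = Set.univ
    · rw [show B = D.root from Subtype.ext h]
    · have hBA : B.1 ≠ A₀.1 := fun hh => hB (hh ▸ subset_rfl)
      have hne : s(B, D.parent B) ≠ s(A₀, D.parent A₀) := by
        simp only [ne_eq, Sym2.eq_iff]
        push_neg
        constructor
        · intro hh; exact absurd (Subtype.ext_iff.mp hh) hBA
        · intro _ hcon
          have hsub := (D.parent_ssub h).subset
          rw [hcon] at hsub
          exact hB hsub
      have hadj : (D.G.deleteEdges {s(A₀, D.parent A₀)}).Adj B (D.parent B) := by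
        rw [deleteEdges_adj, Set.mem_singleton_iff]
        exact ⟨D.adj_parent h, hne⟩
      have hPnsub : ¬ ((D.parent B).1 ⊆ A₀.1) := by
        intro hh
        exact hB ((D.parent_ssub h).subset.trans hh)
      have hlt : B.1.ncard < (D.parent B).1.ncard :=
        Set.ncard_lt_ncard (D.parent_ssub h) (Set.toFinite _)
      exact hadj.reachable.trans (ih (D.parent B) hPnsub (by omega))

lemma isAcyclic : D.G.IsAcyclic := by
  rw [isAcyclic_iff_forall_adj_isBridge]
  intro A B hadj
  have key : ∀ A B : D.Vx, A.1 ≠ Set.univ → D.parent A = B → D.G.IsBridge s(A, B) := by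
    intro A B hAu hAB
    rw [isBridge_iff]
    intro hreach
    rw [← hAB] at hreach
    have hinv := D.side_invariant A hAu hreach
    have h2 := hinv.mp subset_rfl
    have h3 := D.parent_ssub hAu
    exact (ssubset_irrefl _) (h3.trans_subset h2)
  rcases hadj with ⟨h1, h2⟩ | ⟨h1, h2⟩
  · exact key A B h1 h2
  · rw [Sym2.eq_swap]
    exact key B A h1 h2

include D in
lemma isTree : D.G.IsTree := ⟨D.connected, D.isAcyclic⟩

/-- For each `s ∈ A` (A a non-singleton vertex), the maximal vertex containing `s` strictly
below `A`: a child of `A`. -/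
lemma exists_child (A : D.Vx) {s : S} (hs : s ∈ A.1) (hAs : ∀ t : S, A.1 ≠ {t}) :
    ∃ M : D.Vx, s ∈ M.1 ∧ M.1 ⊂ A.1 ∧ D.parent M = A ∧
      (∀ C : D.Vx, s ∈ C.1 → C.1 ⊂ A.1 → C.1 ⊆ M.1) := by
  classical
  set U : Finset D.Vx := Finset.univ.filter (fun C => s ∈ C.1 ∧ C.1 ⊂ A.1) with hU
  have hUne : U.Nonempty := by
    refine ⟨⟨{s}, Or.inr (Or.inr ⟨s, rfl⟩)⟩, ?_⟩
    simp only [hU, Finset.mem_filter, Finset.mem_univ, true_and]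
    refine ⟨rfl, ssubset_of_subset_of_ne (Set.singleton_subset_iff.mpr hs) ?_⟩
    exact fun h => hAs s h.symm
  obtain ⟨m, hm, hmax⟩ := U.exists_max_image (fun C => C.1.ncard) hUne
  simp only [hU, Finset.mem_filter, Finset.mem_univ, true_and] at hm
  have hmaximum : ∀ C : D.Vx, s ∈ C.1 → C.1 ⊂ A.1 → C.1 ⊆ m.1 := by
    intro C hC1 hC2
    have hCU : C ∈ U := by
      simp only [hU, Finset.mem_filter, Finset.mem_univ, true_and]; exact ⟨hC1, hC2⟩
    have hmc := hmax C hCU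
    rcases D.chainP C.2 m.2 ⟨s, hC1, hm.1⟩ with h1 | h1
    · exact h1
    · rw [Set.eq_of_subset_of_ncard_le h1 hmc (Set.toFinite _)]
  have hmu : m.1 ≠ Set.univ := by
    intro h
    have h2 := hm.2
    rw [h] at h2
    exact (ssubset_irrefl _) (h2.trans_subset (Set.subset_univ _))
  have hparent : D.parent m = A := by
    have h1 : (D.parent m).1 ⊆ A.1 := D.parent_min hmu hm.2
    by_contra hcon
    have h2 : (D.parent m).1 ≠ A.1 := fun h => hcon (Subtype.ext h)
    have h3 : (D.parent m).1 ⊂ A.1 := ssubset_of_subset_of_ne h1 h2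
    have h4 : s ∈ (D.parent m).1 := (D.parent_ssub hmu).subset hm.1
    have h5 := hmaximum (D.parent m) h4 h3
    exact (ssubset_irrefl _) ((D.parent_ssub hmu).trans_subset h5)
  exact ⟨m, hm.1, hm.2, hparent, hmaximum⟩

lemma singleton_vx_eq {B : D.Vx} {s : S} (hs : s ∈ B.1) (hBu : B.1 ≠ Set.univ)
    (hBF : B.1 ∉ D.F) : B.1 = {s} := by
  rcases B.2 with h | h | ⟨t, h⟩
  · exact absurd h hBF
  · exact absurd h hBu
  · rw [h] at hs ⊢
    rw [Set.mem_singleton_iff] at hs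
    rw [hs]

lemma three_le_degree (A : D.Vx) (hA : ∀ t : S, A.1 ≠ {t}) :
    3 ≤ (D.G.neighborSet A).ncard := by
  obtain ⟨s, hs⟩ := D.nonemptyP A.2
  obtain ⟨M₁, hM₁s, hM₁ss, hM₁p, hM₁max⟩ := D.exists_child A hs hA
  -- a second child
  have hsecond : ∃ t, t ∈ A.1 ∧ t ∉ M₁.1 := by
    by_contra hcon
    push_neg at hcon
    exact (ssubset_irrefl _) (hM₁ss.trans_subset hcon)
  obtain ⟨t, htA, htM₁⟩ := hsecond
  obtain ⟨M₂, hM₂s, hM₂ss, hM₂p, hM₂max⟩ := D.exists_child A htA hA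
  have hM₁₂ : M₁ ≠ M₂ := by
    intro h
    rw [h] at htM₁
    exact htM₁ hM₂s
  have hadj₁ : D.G.Adj A M₁ := Or.inr ⟨fun h => (ssubset_irrefl _)
      ((h ▸ hM₁ss).trans_subset (Set.subset_univ _)), hM₁p⟩
  have hadj₂ : D.G.Adj A M₂ := Or.inr ⟨fun h => (ssubset_irrefl _)
      ((h ▸ hM₂ss).trans_subset (Set.subset_univ _)), hM₂p⟩
  by_cases hAu : A.1 = Set.univ
  · -- third child, using the basepoint s₀
    -- M b for some b in some F-set B contains B; find t' outside M b and not s₀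
    obtain ⟨B₀, hB₀⟩ := D.hne
    have hB₀ne : B₀.Nonempty := Set.nonempty_of_ncard_ne_zero (by have := D.h2 B₀ hB₀; omega)
    obtain ⟨b, hb⟩ := hB₀ne
    have hbA : b ∈ A.1 := hAu ▸ Set.mem_univ b
    obtain ⟨Mb, hMbs, hMbss, hMbp, hMbmax⟩ := D.exists_child A hbA hA
    have hB₀sub : B₀ ⊆ Mb.1 := by
      refine hMbmax ⟨B₀, Or.inl hB₀⟩ hb ?_
      rw [hAu]
      refine Set.ssubset_univ_iff.mpr ?_
      intro h
      exact D.hs₀ B₀ hB₀ (by rw [show B₀ = Set.univ from h]; trivial)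
    have hs₀Mb : D.s₀ ∉ Mb.1 := by
      intro hcon
      rcases Mb.2 with h | h | ⟨u, h⟩
      · exact D.hs₀ _ h hcon
      · rw [h, hAu] at hMbss; exact (ssubset_irrefl _) hMbss
      · rw [h, Set.mem_singleton_iff] at hcon
        rw [h, ← hcon] at hMbs
        exact D.hs₀ B₀ hB₀ (by rw [Set.mem_singleton_iff] at hMbs; exact hMbs ▸ hb)
    -- the child containing s₀
    have hs₀A : D.s₀ ∈ A.1 := hAu ▸ Set.mem_univ D.s₀
    obtain ⟨M₀, hM₀s, hM₀ss, hM₀p, hM₀max⟩ := D.exists_child A hs₀A hA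
    have hM₀Mb : M₀ ≠ Mb := fun h => hs₀Mb (h ▸ hM₀s)
    -- a third element: Mb ≠ univ \ {s₀}
    have hMbne : Mb.1 ≠ {D.s₀}ᶜ := by
      intro h
      rcases Mb.2 with hh | hh | ⟨u, hh⟩
      · have := D.h4 Mb.1 hh
        rw [h, compl_compl, Set.ncard_singleton] at this
        omega
      · rw [hh, hAu] at hMbss; exact (ssubset_irrefl _) hMbss
      · have h1 : ({u} : Set S).ncard = 1 := Set.ncard_singleton u
        rw [← hh, h] at h1
        have h2 : ({D.s₀}ᶜ : Set S).ncard + ({D.s₀} : Set S).ncard = Fintype.card S := by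
          have := Set.ncard_add_ncard_compl ({D.s₀} : Set S)
          rw [Nat.card_eq_fintype_card] at this
          omega
        rw [Set.ncard_singleton] at h2
        have := D.card4
        omega
    have hthird : ∃ u, u ∈ A.1 ∧ u ∉ Mb.1 ∧ u ≠ D.s₀ := by
      have hsub : Mb.1 ⊆ {D.s₀}ᶜ := fun x hx hx2 => hs₀Mb ((Set.mem_singleton_iff.mp hx2) ▸ hx)
      have hssub : Mb.1 ⊂ {D.s₀}ᶜ := ssubset_of_subset_of_ne hsub hMbne
      obtain ⟨u, hu1, hu2⟩ := Set.exists_of_ssubset hssub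
      exact ⟨u, hAu ▸ Set.mem_univ u, hu2, fun h => (h ▸ hu1) rfl⟩
    obtain ⟨u, huA, huMb, hus₀⟩ := hthird
    obtain ⟨Mu, hMus, hMuss, hMup, hMumax⟩ := D.exists_child A huA hA
    have hMuMb : Mu ≠ Mb := fun h => huMb (h ▸ hMus)
    have hMuM₀ : Mu ≠ M₀ := by
      intro h
      -- then s₀ ∈ Mu; Mu is a vertex with u ∈ Mu and s₀ ∈ Mu
      have hs₀Mu : D.s₀ ∈ Mu.1 := h ▸ hM₀s
      rcases Mu.2 with hh | hh | ⟨w, hh⟩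
      · exact D.hs₀ _ hh hs₀Mu
      · rw [hh, hAu] at hMuss; exact (ssubset_irrefl _) hMuss
      · rw [hh, Set.mem_singleton_iff] at hs₀Mu hMus
        exact hus₀ (hMus.trans hs₀Mu.symm)
    have hadjb : D.G.Adj A Mb := Or.inr ⟨fun h => (ssubset_irrefl _)
        ((h ▸ hMbss).trans_subset (Set.subset_univ _)), hMbp⟩
    have hadj₀ : D.G.Adj A M₀ := Or.inr ⟨fun h => (ssubset_irrefl _)
        ((h ▸ hM₀ss).trans_subset (Set.subset_univ _)), hM₀p⟩
    have hadju : D.G.Adj A Mu := Or.inr ⟨fun h => (ssubset_irrefl _)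
        ((h ▸ hMuss).trans_subset (Set.subset_univ _)), hMup⟩
    have hsub : ({M₀, Mb, Mu} : Set D.Vx) ⊆ D.G.neighborSet A := by
      rintro x (rfl | rfl | rfl)
      · exact hadj₀
      · exact hadjb
      · exact hadju
    have hcard : ({M₀, Mb, Mu} : Set D.Vx).ncard = 3 := by
      rw [Set.ncard_eq_three]
      exact ⟨M₀, Mb, Mu, hM₀Mb, fun h => hMuM₀ h.symm, fun h => hMuMb h.symm, rfl⟩
    calc 3 = ({M₀, Mb, Mu} : Set D.Vx).ncard := hcard.symm
      _ ≤ (D.G.neighborSet A).ncard := Set.ncard_le_ncard hsub (Set.toFinite _)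
  · -- A is not the root: parent A is a third neighbor
    have hadjp : D.G.Adj A (D.parent A) := D.adj_parent hAu
    have hp₁ : D.parent A ≠ M₁ := by
      intro h
      exact (ssubset_irrefl _) ((D.parent_ssub hAu).trans_subset ((h ▸ hM₁ss).subset))
    have hp₂ : D.parent A ≠ M₂ := by
      intro h
      exact (ssubset_irrefl _) ((D.parent_ssub hAu).trans_subset ((h ▸ hM₂ss).subset))
    have hsub : ({D.parent A, M₁, M₂} : Set D.Vx) ⊆ D.G.neighborSet A := by
      rintro x (rfl | rfl | rfl)
      · exact hadjp
      · exact hadj₁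
      · exact hadj₂
    have hcard : ({D.parent A, M₁, M₂} : Set D.Vx).ncard = 3 := by
      rw [Set.ncard_eq_three]
      exact ⟨D.parent A, M₁, M₂, hp₁, hp₂, hM₁₂, rfl⟩
    calc 3 = ({D.parent A, M₁, M₂} : Set D.Vx).ncard := hcard.symm
      _ ≤ (D.G.neighborSet A).ncard := Set.ncard_le_ncard hsub (Set.toFinite _)

lemma ne_univ_of_mem_F {A : Set S} (hA : A ∈ D.F) : A ≠ Set.univ := by
  intro h
  exact D.hs₀ A hA (h ▸ Set.mem_univ D.s₀)

lemma not_singleton_of_mem_F {A : Set S} (hA : A ∈ D.F) (t : S) : A ≠ {t} := by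
  intro h
  have := D.h2 A hA
  rw [h, Set.ncard_singleton] at this
  omega

/-- The stable tree constructed from the laminar data. -/
noncomputable def tree : StableTree S where
  V := D.Vx
  finiteV := by unfold Vx; infer_instance
  G := D.G
  isTree := D.isTree
  leaf s := ⟨{s}, Or.inr (Or.inr ⟨s, rfl⟩)⟩
  leaf_injective := by
    intro s t h
    have := Subtype.ext_iff.mp h
    simpa [Set.singleton_eq_singleton_iff] using this
  degree_leaf := by
    intro s
    have hsu : ((⟨{s}, Or.inr (Or.inr ⟨s, rfl⟩)⟩ : D.Vx) : Set S) ≠ Set.univ := by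
      simpa using (D.univ_ne_singleton s).symm
    have hset : D.G.neighborSet ⟨{s}, Or.inr (Or.inr ⟨s, rfl⟩)⟩ =
        {D.parent ⟨{s}, Or.inr (Or.inr ⟨s, rfl⟩)⟩} := by
      ext B
      constructor
      · intro hB
        rcases hB with ⟨h1, h2⟩ | ⟨h1, h2⟩
        · exact (Set.mem_singleton_iff.mpr h2.symm)
        · exfalso
          have h3 := D.parent_ssub h1
          rw [h2] at h3
          obtain ⟨x, hx⟩ := D.nonemptyP B.2
          have hxs := h3.subset hx
          rw [Set.mem_singleton_iff] at hxs
          subst hxs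
          have h4 : B.1 ≠ {x} := by
            intro hh
            rw [hh] at h3
            exact (ssubset_irrefl _) h3
          rcases B.2 with hh | hh | ⟨u, hh⟩
          · have h5 : B.1 ⊆ {x} := h3.subset
            have h6 := D.h2 B.1 hh
            have h7 := Set.ncard_le_ncard h5 (Set.toFinite _)
            rw [Set.ncard_singleton] at h7
            omega
          · have h5 : ({x} : Set S) = Set.univ := Set.eq_univ_of_univ_subset (hh ▸ h3.subset)
            exact D.univ_ne_singleton x h5.symm
          · apply h4
            rw [hh]
            rw [hh, Set.mem_singleton_iff] at hx
            rw [hx]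
      · intro hB
        rw [Set.mem_singleton_iff] at hB
        rw [hB]
        exact Or.inl ⟨hsu, rfl⟩
    rw [hset, Set.ncard_singleton]
  leaf_of_degree_one := by
    intro v hv
    by_contra hcon
    push_neg at hcon
    have hA : ∀ t : S, (v : Set S) ≠ {t} := by
      intro t h
      exact hcon t (Subtype.ext h.symm)
    have := D.three_le_degree v hA
    omega
  three_le_degree_internal := by
    intro v hv
    refine D.three_le_degree v ?_
    intro t h
    exact hv ⟨t, Subtype.ext h.symm⟩

lemma tree_G : (D.tree).G = D.G := rfl

lemma tree_leaf (s : S) : (D.tree).leaf s = (⟨{s}, Or.inr (Or.inr ⟨s, rfl⟩)⟩ : D.Vx) := rfl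

lemma mem_internalSplits_of_mem_F {A : Set S} (hA : A ∈ D.F) :
    (A, Aᶜ) ∈ (D.tree).internalSplits ∧ (Aᶜ, A) ∈ (D.tree).internalSplits := by
  have hAu : ((⟨A, Or.inl hA⟩ : D.Vx) : Set S) ≠ Set.univ := D.ne_univ_of_mem_F hA
  have hadj : D.G.Adj ⟨A, Or.inl hA⟩ (D.parent ⟨A, Or.inl hA⟩) := D.adj_parent hAu
  have hintA : (D.tree).Internal ⟨A, Or.inl hA⟩ := by
    rintro ⟨s, hs⟩
    exact D.not_singleton_of_mem_F hA s (Subtype.ext_iff.mp hs).symm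
  have hintP : (D.tree).Internal (D.parent ⟨A, Or.inl hA⟩) := by
    rintro ⟨s, hs⟩
    have h1 : (D.parent ⟨A, Or.inl hA⟩ : Set S) = {s} := (Subtype.ext_iff.mp hs).symm
    have h2 : A.ncard ≤ (D.parent ⟨A, Or.inl hA⟩ : Set S).ncard :=
      Set.ncard_le_ncard (D.parent_ssub hAu).subset (Set.toFinite _)
    have h3 := D.h2 A hA
    rw [h1, Set.ncard_singleton] at h2
    omega
  have hside : (D.tree).splitSide ⟨A, Or.inl hA⟩ (D.parent ⟨A, Or.inl hA⟩) = A := by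
    ext s
    constructor
    · intro hs
      have hreach : (D.G.deleteEdges
          {s((⟨A, Or.inl hA⟩ : D.Vx), D.parent ⟨A, Or.inl hA⟩)}).Reachable
          (⟨{s}, Or.inr (Or.inr ⟨s, rfl⟩)⟩ : D.Vx) ⟨A, Or.inl hA⟩ := hs
      have hinv := D.side_invariant _ hAu hreach
      have : ({s} : Set S) ⊆ A := hinv.mpr subset_rfl
      exact this rfl
    · intro hs
      have hreach := D.reach_down _ hAu (A.ncard) (⟨{s}, Or.inr (Or.inr ⟨s, rfl⟩)⟩ : D.Vx)
        (Set.singleton_subset_iff.mpr hs) (by show A.ncard - ({s} : Set S).ncard ≤ A.ncard; omega)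
      exact hreach
  have hadj' : (D.tree).G.Adj ⟨A, Or.inl hA⟩ (D.parent ⟨A, Or.inl hA⟩) := hadj
  have hsideP : (D.tree).splitSide (D.parent ⟨A, Or.inl hA⟩) ⟨A, Or.inl hA⟩ = Aᶜ := by
    rw [StableTree.splitSide_compl (D.tree) hadj', hside]
  constructor
  · exact ⟨_, _, hadj', hintA, hintP, by rw [hside, hsideP]⟩
  · exact ⟨_, _, hadj'.symm, hintP, hintA, by rw [hside, hsideP]⟩

end LamData

end Build

section Main

lemma SplitCompatible.symm' {S : Type} {p q : Set S × Set S} (h : SplitCompatible p q) :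
    SplitCompatible q p := by
  unfold SplitCompatible at *
  rw [Set.inter_comm q.1 p.1, Set.inter_comm q.1 p.2, Set.inter_comm q.2 p.1,
    Set.inter_comm q.2 p.2]
  tauto

lemma StableTree.sides_card {S : Type} [Fintype S] {T : StableTree S} {p : Set S × Set S}
    (h : p ∈ T.internalSplits) : 2 ≤ p.1.ncard ∧ 2 ≤ p.2.ncard := by
  obtain ⟨a, b, hab, ha, hb, rfl⟩ := h
  exact ⟨T.two_le_splitSide hab ha, T.two_le_splitSide hab.symm hb⟩

/-- Let `T₁` and `T₂` be stable trees on a finite set `S`.  There exists a stable tree `T`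
on `S` whose collection of internal-edge splits contains every internal-edge split of `T₁`
and of `T₂` if and only if every internal-edge split of `T₁` is compatible with every
internal-edge split of `T₂`. -/
theorem exists_common_refinement_iff_compatible {S : Type} [Fintype S]
    (T₁ T₂ : StableTree S) :
    (∃ T : StableTree S,
        T₁.internalSplits ⊆ T.internalSplits ∧ T₂.internalSplits ⊆ T.internalSplits) ↔
      (∀ p ∈ T₁.internalSplits, ∀ q ∈ T₂.internalSplits, SplitCompatible p q) := by
  constructor
  · rintro ⟨T, h1, h2⟩ p hp q hq
    exact T.compat_self (h1 hp) (h2 hq)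
  · intro h
    by_cases hempty : T₁.internalSplits = ∅ ∧ T₂.internalSplits = ∅
    · exact ⟨T₁, subset_rfl, by rw [hempty.2]; exact Set.empty_subset _⟩
    · set Sig := T₁.internalSplits ∪ T₂.internalSplits with hSig
      have hSigne : Sig.Nonempty := by
        rcases not_and_or.mp hempty with hh | hh
        · obtain ⟨p, hp⟩ := Set.nonempty_iff_ne_empty.mpr hh
          exact ⟨p, Or.inl hp⟩
        · obtain ⟨p, hp⟩ := Set.nonempty_iff_ne_empty.mpr hh
          exact ⟨p, Or.inr hp⟩
      -- basic facts about members of Sig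
      have hsides : ∀ p ∈ Sig, 2 ≤ p.1.ncard ∧ 2 ≤ p.2.ncard ∧ p.2 = p.1ᶜ := by
        rintro p (hp | hp)
        · exact ⟨(StableTree.sides_card hp).1, (StableTree.sides_card hp).2,
            T₁.snd_eq_compl_fst hp⟩
        · exact ⟨(StableTree.sides_card hp).1, (StableTree.sides_card hp).2,
            T₂.snd_eq_compl_fst hp⟩
      have hswap : ∀ p ∈ Sig, (p.2, p.1) ∈ Sig := by
        rintro p (hp | hp)
        · exact Or.inl (T₁.swap_mem_internalSplits hp)
        · exact Or.inr (T₂.swap_mem_internalSplits hp)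
      have hall : ∀ p ∈ Sig, ∀ q ∈ Sig, SplitCompatible p q := by
        rintro p (hp | hp) q (hq | hq)
        · exact T₁.compat_self hp hq
        · exact h p hp q hq
        · exact (h q hq p hp).symm'
        · exact T₂.compat_self hp hq
      -- choose the basepoint
      obtain ⟨p₀, hp₀⟩ := hSigne
      have hp₀1 : 2 ≤ p₀.1.ncard := (hsides p₀ hp₀).1
      have hp₀ne : p₀.1.Nonempty := Set.nonempty_of_ncard_ne_zero (by omega)
      obtain ⟨s₀, hs₀mem⟩ := hp₀ne
      set F : Set (Set S) := {A | (A, Aᶜ) ∈ Sig ∧ s₀ ∉ A} with hF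
      have hp₀eq : p₀ = (p₀.1, p₀.1ᶜ) := by
        rw [← (hsides p₀ hp₀).2.2]
      have hneF : F.Nonempty := by
        refine ⟨p₀.1ᶜ, ?_, fun hc => hc hs₀mem⟩
        have h1 := hswap p₀ hp₀
        rw [(hsides p₀ hp₀).2.2] at h1
        rw [compl_compl]
        exact h1
      have hmemF : ∀ A ∈ F, (A, Aᶜ) ∈ Sig := fun A hA => hA.1
      set D : LamData S :=
        { F := F
          s₀ := s₀
          hs₀ := fun A hA => hA.2
          h2 := fun A hA => (hsides _ (hmemF A hA)).1
          h4 := fun A hA => (hsides _ (hmemF A hA)).2.1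
          hlam := by
            intro A hA B hB
            have hcompat := hall _ (hmemF A hA) _ (hmemF B hB)
            rcases hcompat with hc | hc | hc | hc
            · exact Or.inr (Or.inr hc)
            · left
              rw [← Set.diff_eq] at hc
              exact Set.diff_eq_empty.mp hc
            · right; left
              rw [Set.inter_comm, ← Set.diff_eq] at hc
              exact Set.diff_eq_empty.mp hc
            · exfalso
              have : s₀ ∈ (Aᶜ ∩ Bᶜ : Set S) := ⟨hA.2, hB.2⟩
              rw [hc] at this
              exact this
          hne := hneF } with hD
      refine ⟨D.tree, ?_, ?_⟩ <;>
      · intro p hp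
        have hpSig : p ∈ Sig := by
          first
          | exact Or.inl hp
          | exact Or.inr hp
        have hpeq : p = (p.1, p.1ᶜ) := by rw [← (hsides p hpSig).2.2]
        by_cases hs : s₀ ∈ p.1
        · have h1 : (p.1ᶜ, p.1) ∈ Sig := by
            have := hswap p hpSig
            rwa [(hsides p hpSig).2.2] at this
          have hFmem : p.1ᶜ ∈ F := by
            refine ⟨?_, fun hc => hc hs⟩
            rw [compl_compl]
            exact h1
          have h2 := (D.mem_internalSplits_of_mem_F hFmem).2
          rw [compl_compl] at h2
          rw [hpeq]
          exact h2
        · have hFmem : p.1 ∈ F := ⟨by rw [← hpeq]; exact hpSig, hs⟩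
          have h2 := (D.mem_internalSplits_of_mem_F hFmem).1
          rw [hpeq]
          exact h2

end Main
end
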